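/- arXiv:0806.2674 — 6 statements merged into one kernel-verified Lean document; each statement's English description precedes it below -/
import Mathlib

section
/- Under hypotheses (H1) and (H2), for every P > 0 the sequence C_M(P) = (1/M)·E[log det G_M] converges to a finite limit as M → ∞ (the limit is denoted C(P)). -/
open MeasureTheory ProbabilityTheory Filter Matrix

/-- The `M × (M+1)` two-diagonal channel matrix built from the fading
coefficients `a`, `b` (indexed from `1` as in the paper). -/
def Hmat (M : ℕ) (a b : ℕ → ℂ) : Matrix (Fin M) (Fin (M + 1)) ℂ :=
  fun i j =>
    if (j : ℕ) = (i : ℕ) then a ((i : ℕ) + 1)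
    else if (j : ℕ) = (i : ℕ) + 1 then b ((i : ℕ) + 1) else 0

/-- `log det (I + P · H_M H_M*)`, the determinant being real (≥ 1). -/
noncomputable def logdetG (M : ℕ) (P : ℝ) (a b : ℕ → ℂ) : ℝ :=
  Real.log ((Matrix.det (1 + (P : ℂ) • (Hmat M a b * (Hmat M a b)ᴴ))).re)

/-!
Up to zero columns, rows `1..M` of `H_{M+N}` form `H_M` and rows `M+1..M+N` form the matrix `H_N`
of the coefficients shifted by `M`. Hence `I + P H_{M+N} H_{M+N}*` is a positive definite block
matrix whose diagonal blocks are the corresponding matrices `G_M` and `G_N`, and Fischer's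
inequality `det [[A, B], [B*, D]] ≤ det A · det D` makes `log det G` pointwise subadditive along
shifts. The coefficients being i.i.d., the law of `log det G_N` does not depend on the shift, so
`M ↦ E[log det G_M]` is subadditive. It is nonnegative, and finite since `log det G_M` is then
dominated by shifted copies of `log det G_1 = log (1 + P (|a₁|² + |b₁|²))`, which is integrable
under (H1). Fekete's lemma gives the limit.
-/

open scoped ComplexOrder MatrixOrder

namespace Matrix

variable {l l' m m' n α 𝕜 : Type*}

lemma submatrix_mul_conjTranspose_self [Fintype l] [Fintype l'] [NonUnitalNonAssocSemiring α]
    [StarRing α] {H : Matrix m l α} {H' : Matrix m' l' α} (r : m' → m) {c : l' → l}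
    (hc : Function.Injective c) (hH : ∀ i k, H (r i) (c k) = H' i k)
    (hzero : ∀ i x, x ∉ Set.range c → H (r i) x = 0) :
    (H * Hᴴ).submatrix r r = H' * H'ᴴ := by
  ext i j
  simp only [submatrix_apply, mul_apply, conjTranspose_apply]
  refine (Fintype.sum_of_injective c hc _ _ (fun x hx => by simp [hzero i x hx]) fun k => ?_).symm
  rw [hH, hH]

lemma posSemidef_smul_mul_conjTranspose [Fintype m] [Fintype l] {P : ℝ} (hP : 0 ≤ P)
    (H : Matrix m l ℂ) : ((P : ℂ) • (H * Hᴴ)).PosSemidef :=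
  (posSemidef_self_mul_conjTranspose H).smul (Complex.zero_le_real.mpr hP)

variable [Fintype m] [Fintype n] [DecidableEq m] [DecidableEq n] [RCLike 𝕜]

lemma PosSemidef.det_le_one {A : Matrix n n 𝕜} (hA : A.PosSemidef) (h : A ≤ 1) : A.det ≤ 1 := by
  have hle : ∀ i, hA.1.eigenvalues i ≤ 1 := fun i =>
    (le_algebraMap_iff_spectrum_le (R := ℝ) (r := 1) hA.1.isSelfAdjoint).mp (by simpa using h) _
      (hA.1.eigenvalues_mem_spectrum_real i)
  rw [hA.1.det_eq_prod_eigenvalues, ← RCLike.ofReal_prod, ← RCLike.ofReal_one,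
    RCLike.ofReal_le_ofReal]
  exact Finset.prod_le_one (fun i _ => hA.eigenvalues_nonneg i) fun i _ => hle i

/-- Conjugating by `B^{-1/2}` reduces the claim to `PosSemidef.det_le_one`. -/
lemma PosSemidef.det_le_det {A B : Matrix n n 𝕜} (hA : A.PosSemidef) (hB : B.PosDef)
    (hAB : A ≤ B) : A.det ≤ B.det := by
  set R := CFC.sqrt B
  have hRR : R * R = B := CFC.sqrt_mul_sqrt_self _ hB.posSemidef.nonneg
  have hR : IsUnit R.det := by
    rw [isUnit_iff_ne_zero, ← mul_self_ne_zero, ← det_mul, hRR]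
    exact hB.det_pos.ne'
  have hRinv : R⁻¹ᴴ = R⁻¹ := by
    rw [conjTranspose_nonsing_inv, (CFC.sqrt_nonneg B).posSemidef.isHermitian.eq]
  have hB_conj : R⁻¹ * B * R⁻¹ = 1 := by
    rw [← hRR, ← mul_assoc, nonsing_inv_mul _ hR, one_mul, mul_nonsing_inv _ hR]
  have hA_conj : (R⁻¹ * A * R⁻¹).det ≤ 1 := by
    refine PosSemidef.det_le_one ?_ ?_
    · simpa [hRinv] using hA.conjTranspose_mul_mul_same R⁻¹
    · simpa only [star_eq_conjTranspose, hRinv, hB_conj] using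
        star_left_conjugate_le_conjugate hAB R⁻¹
  have hpos : 0 < R⁻¹.det * R⁻¹.det := by
    rw [← det_mul, ← Matrix.mul_inv_rev, hRR]
    exact hB.inv.det_pos
  have hB_det := congrArg det hB_conj
  simp only [det_mul, det_one] at hA_conj hB_det
  refine le_of_mul_le_mul_left ?_ hpos
  linear_combination hA_conj - hB_det

lemma one_le_det_one_add {A : Matrix n n 𝕜} (hA : A.PosSemidef) : 1 ≤ (1 + A).det := by
  simpa using PosSemidef.one.det_le_det (PosDef.one.add_posSemidef hA)
    (le_add_of_nonneg_right hA.nonneg)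

/-- **Fischer's inequality**. -/
theorem PosDef.det_le_det_toBlocks {A : Matrix (m ⊕ n) (m ⊕ n) 𝕜} (hA : A.PosDef) :
    A.det ≤ A.toBlocks₁₁.det * A.toBlocks₂₂.det := by
  have hA₁₁ : A.toBlocks₁₁.PosDef := hA.submatrix Sum.inl_injective
  have hA₂₂ : A.toBlocks₂₂.PosDef := hA.submatrix Sum.inr_injective
  have hblocks := A.fromBlocks_toBlocks
  obtain ⟨-, hA₂₁, -, -⟩ := isHermitian_fromBlocks_iff.mp (hblocks ▸ hA.1)
  rw [← hA₂₁] at hblocks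
  let := hA₁₁.isUnit.invertible
  set X := A.toBlocks₁₂ᴴ * A.toBlocks₁₁⁻¹ * A.toBlocks₁₂
  have hX : X.PosSemidef := hA₁₁.inv.posSemidef.conjTranspose_mul_mul_same _
  have hSchur : (A.toBlocks₂₂ - X).PosSemidef :=
    (PosDef.fromBlocks₁₁ _ _ hA₁₁).mp (hblocks ▸ hA.posSemidef)
  have hdet := det_fromBlocks₁₁ A.toBlocks₁₁ A.toBlocks₁₂ A.toBlocks₁₂ᴴ A.toBlocks₂₂
  rw [hblocks, invOf_eq_nonsing_inv] at hdet
  rw [hdet]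
  refine mul_le_mul_of_nonneg_left (hSchur.det_le_det hA₂₂ ?_) hA₁₁.det_pos.le
  rwa [le_iff, sub_sub_cancel]

end Matrix

lemma Complex.log_re_le_add_of_le_mul {z w₁ w₂ : ℂ} (hz : 0 < z) (h₁ : 0 < w₁) (h₂ : 0 < w₂)
    (h : z ≤ w₁ * w₂) : Real.log z.re ≤ Real.log w₁.re + Real.log w₂.re := by
  obtain ⟨hz, -⟩ := Complex.pos_iff.mp hz
  obtain ⟨h₁, h₁'⟩ := Complex.pos_iff.mp h₁
  obtain ⟨h₂, h₂'⟩ := Complex.pos_iff.mp h₂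
  rw [← Real.log_mul h₁.ne' h₂.ne']
  refine Real.log_le_log hz ?_
  simpa [← h₁', ← h₂'] using (Complex.le_def.mp h).1

lemma Real.log_one_add_sq_le (x : ℝ) :
    Real.log (1 + x ^ 2) ≤ Real.log 2 + 1 + Real.log x ^ 2 := by
  rcases le_or_gt (x ^ 2) 1 with hx | hx
  · have : Real.log (1 + x ^ 2) ≤ Real.log 2 := Real.log_le_log (by positivity) (by linarith)
    nlinarith [sq_nonneg (Real.log x)]
  · have hx0 : x ≠ 0 := by rintro rfl; norm_num at hx
    have : Real.log (1 + x ^ 2) ≤ Real.log 2 + 2 * Real.log x :=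
      calc Real.log (1 + x ^ 2) ≤ Real.log (2 * x ^ 2) :=
            Real.log_le_log (by positivity) (by linarith)
        _ = Real.log 2 + 2 * Real.log x := by
          rw [Real.log_mul two_ne_zero (pow_ne_zero 2 hx0), Real.log_pow, Nat.cast_ofNat]
    nlinarith [sq_nonneg (Real.log x - 1)]

lemma submatrix_Hmat_mul_conjTranspose {K N s : ℕ} (hK : s + N ≤ K) (a b : ℕ → ℂ)
    (r : Fin N → Fin K) (hr : ∀ i, (r i : ℕ) = s + i) :
    (Hmat K a b * (Hmat K a b)ᴴ).submatrix r r
      = Hmat N (fun n => a (s + n)) (fun n => b (s + n))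
        * (Hmat N (fun n => a (s + n)) (fun n => b (s + n)))ᴴ := by
  refine submatrix_mul_conjTranspose_self r (c := fun k => ⟨s + k, by omega⟩)
    (fun k k' h => Fin.ext (by simpa using h)) (fun i k => ?_) (fun i x hx => ?_)
  · simp [Hmat, hr, add_assoc]
  · have hcol : ∀ k : ℕ, k < N + 1 → (x : ℕ) ≠ s + k :=
      fun k hk h => hx ⟨⟨k, hk⟩, Fin.ext h.symm⟩
    have := hcol i (by omega)
    have := hcol (i + 1) (by omega)
    simp only [Hmat, hr]
    split_ifs <;> first | rfl | omega

lemma submatrix_one_add_smul_Hmat {K N s : ℕ} (hK : s + N ≤ K) (P : ℝ) (a b : ℕ → ℂ)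
    (r : Fin N → Fin K) (hr : ∀ i, (r i : ℕ) = s + i) :
    (1 + (P : ℂ) • (Hmat K a b * (Hmat K a b)ᴴ)).submatrix r r
      = 1 + (P : ℂ) • (Hmat N (fun n => a (s + n)) (fun n => b (s + n))
        * (Hmat N (fun n => a (s + n)) (fun n => b (s + n)))ᴴ) := by
  have hr_inj : Function.Injective r := fun i j h => Fin.ext (by
    have := congrArg Fin.val h; have := hr i; have := hr j; omega)
  show (1 : Matrix _ _ ℂ).submatrix r r + (P : ℂ) •
      (Hmat K a b * (Hmat K a b)ᴴ).submatrix r r = _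
  rw [submatrix_one _ hr_inj, submatrix_Hmat_mul_conjTranspose hK a b r hr]

lemma logdetG_add_le (M N : ℕ) {P : ℝ} (hP : 0 ≤ P) (a b : ℕ → ℂ) :
    logdetG (M + N) P a b
      ≤ logdetG M P a b + logdetG N P (fun n => a (M + n)) (fun n => b (M + n)) := by
  have hG : ∀ K (H : Matrix (Fin K) (Fin (K + 1)) ℂ), (1 + (P : ℂ) • (H * Hᴴ)).PosDef :=
    fun K H => PosDef.one.add_posSemidef (posSemidef_smul_mul_conjTranspose hP H)
  let e : Fin M ⊕ Fin N ≃ Fin (M + N) := finSumFinEquiv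
  set S := 1 + (P : ℂ) • (Hmat (M + N) a b * (Hmat (M + N) a b)ᴴ) with hS
  have hfischer : S.det ≤ (S.submatrix (e ∘ Sum.inl) (e ∘ Sum.inl)).det
      * (S.submatrix (e ∘ Sum.inr) (e ∘ Sum.inr)).det := by
    have h := ((hG _ (Hmat (M + N) a b)).submatrix e.injective).det_le_det_toBlocks
    rwa [det_submatrix_equiv_self] at h
  rw [hS, submatrix_one_add_smul_Hmat (s := 0) (by omega) P a b _ (by simp [e]),
    submatrix_one_add_smul_Hmat (s := M) le_rfl P a b _ (by simp [e])] at hfischer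
  simp only [zero_add] at hfischer
  exact Complex.log_re_le_add_of_le_mul (hG _ _).det_pos (hG _ _).det_pos (hG _ _).det_pos
    hfischer

lemma logdetG_nonneg (M : ℕ) {P : ℝ} (hP : 0 ≤ P) (a b : ℕ → ℂ) : 0 ≤ logdetG M P a b :=
  Real.log_nonneg
    (Complex.le_def.mp (one_le_det_one_add (posSemidef_smul_mul_conjTranspose hP _))).1

lemma logdetG_zero (P : ℝ) (a b : ℕ → ℂ) : logdetG 0 P a b = 0 := by
  simp [logdetG]

lemma logdetG_one (P : ℝ) (a b : ℕ → ℂ) :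
    logdetG 1 P a b = Real.log (1 + P * (‖a 1‖ ^ 2 + ‖b 1‖ ^ 2)) := by
  simp [logdetG, Hmat, mul_apply, Complex.mul_conj, Complex.normSq_eq_norm_sq,
    mul_add, -Complex.ofReal_pow]

lemma logdetG_one_le {P : ℝ} (hP : 0 ≤ P) (a b : ℕ → ℂ) :
    logdetG 1 P a b
      ≤ Real.log (1 + P) + 2 * (Real.log 2 + 1) + Real.log ‖a 1‖ ^ 2 + Real.log ‖b 1‖ ^ 2 := by
  rw [logdetG_one]
  have hx := sq_nonneg ‖a 1‖
  have hy := sq_nonneg ‖b 1‖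
  calc Real.log (1 + P * (‖a 1‖ ^ 2 + ‖b 1‖ ^ 2))
      ≤ Real.log ((1 + P) * (1 + ‖a 1‖ ^ 2) * (1 + ‖b 1‖ ^ 2)) :=
        Real.log_le_log (by positivity)
          (by nlinarith [mul_nonneg hP hx, mul_nonneg hx hy, mul_nonneg (mul_nonneg hP hx) hy])
    _ = Real.log (1 + P) + Real.log (1 + ‖a 1‖ ^ 2) + Real.log (1 + ‖b 1‖ ^ 2) := by
        rw [Real.log_mul (by positivity) (by positivity),
          Real.log_mul (by positivity) (by positivity)]
    _ ≤ _ := by linarith [Real.log_one_add_sq_le ‖a 1‖, Real.log_one_add_sq_le ‖b 1‖]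

lemma measurable_logdetG {Ω : Type*} [MeasurableSpace Ω] {a b : ℕ → Ω → ℂ}
    (ha : ∀ n, Measurable (a n)) (hb : ∀ n, Measurable (b n)) (M : ℕ) (P : ℝ) :
    Measurable fun ω => logdetG M P (fun n => a n ω) (fun n => b n ω) := by
  have hH : Continuous fun p : (ℕ → ℂ) × (ℕ → ℂ) => Hmat M p.1 p.2 :=
    continuous_matrix fun i j => by unfold Hmat; split_ifs <;> fun_prop
  have hlogdet : Measurable fun p : (ℕ → ℂ) × (ℕ → ℂ) => logdetG M P p.1 p.2 :=
    Real.measurable_log.comp (Continuous.measurable (by fun_prop))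
  exact hlogdet.comp (f := fun ω => (fun n => a n ω, fun n => b n ω))
    ((measurable_pi_lambda _ ha).prodMk (measurable_pi_lambda _ hb))

lemma ProbabilityTheory.iIndepFun.identDistrib_comp {ι Ω E : Type*} [MeasurableSpace Ω]
    [MeasurableSpace E] {μ : Measure Ω} {X : ι → Ω → E} (hX : ∀ i, Measurable (X i))
    (h : iIndepFun X μ) {g : ι → ι} (hg : Function.Injective g)
    (hlaw : ∀ i, μ.map (X (g i)) = μ.map (X i)) :
    IdentDistrib (fun ω i => X (g i) ω) (fun ω i => X i ω) μ μ where
  aemeasurable_fst := (measurable_pi_lambda _ fun i => hX (g i)).aemeasurable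
  aemeasurable_snd := (measurable_pi_lambda _ hX).aemeasurable
  map_eq := by
    rw [(h.precomp hg).map_fun_eq_infinitePi_map (fun i => hX (g i)),
      h.map_fun_eq_infinitePi_map hX]
    simp only [hlaw]

section Channel

variable {Ω : Type*} [MeasureSpace Ω] {πa πb : Measure ℂ} {a b : ℕ → Ω → ℂ}

lemma identDistrib_logdetG_shift (ha_meas : ∀ n, Measurable (a n))
    (hb_meas : ∀ n, Measurable (b n)) (ha_law : ∀ n, Measure.map (a n) ℙ = πa)
    (hb_law : ∀ n, Measure.map (b n) ℙ = πb) (h_indep : iIndepFun (Sum.elim a b) ℙ)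
    (M s : ℕ) (P : ℝ) :
    IdentDistrib (fun ω => logdetG M P (fun n => a (s + n) ω) (fun n => b (s + n) ω))
      (fun ω => logdetG M P (fun n => a n ω) (fun n => b n ω)) ℙ ℙ := by
  have hX : ∀ i, Measurable (Sum.elim a b i) := by
    rintro (n | n)
    exacts [ha_meas n, hb_meas n]
  have hinj : Function.Injective (Sum.map (s + ·) (s + ·)) :=
    Sum.map_injective.mpr ⟨add_right_injective s, add_right_injective s⟩
  have hshift := h_indep.identDistrib_comp hX hinj (by rintro (n | n) <;> simp [ha_law, hb_law])
  have hmeas : Measurable fun v : ℕ ⊕ ℕ → ℂ =>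
      logdetG M P (fun n => v (Sum.inl n)) (fun n => v (Sum.inr n)) :=
    measurable_logdetG (fun n => measurable_pi_apply (Sum.inl n))
      (fun n => measurable_pi_apply (Sum.inr n)) M P
  exact hshift.comp hmeas

lemma integrable_logdetG (ha_meas : ∀ n, Measurable (a n))
    (hb_meas : ∀ n, Measurable (b n)) (ha_law : ∀ n, Measure.map (a n) ℙ = πa)
    (hb_law : ∀ n, Measure.map (b n) ℙ = πb) (h_indep : iIndepFun (Sum.elim a b) ℙ)
    (H1a : Integrable (fun x : ℂ => Real.log ‖x‖ ^ 2) πa)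
    (H1b : Integrable (fun x : ℂ => Real.log ‖x‖ ^ 2) πb) {P : ℝ} (hP : 0 ≤ P) (M : ℕ) :
    Integrable (fun ω => logdetG M P (fun n => a n ω) (fun n => b n ω)) ℙ := by
  have := h_indep.isProbabilityMeasure
  have hmeas := measurable_logdetG ha_meas hb_meas
  have hone : Integrable (fun ω => logdetG 1 P (fun n => a n ω) (fun n => b n ω)) ℙ := by
    have hbound := (((integrable_const (Real.log (1 + P) + 2 * (Real.log 2 + 1))).add
      ((ha_law 1 ▸ H1a).comp_measurable (ha_meas 1))).add
      ((hb_law 1 ▸ H1b).comp_measurable (hb_meas 1)))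
    refine hbound.mono' (hmeas 1 P).aestronglyMeasurable (ae_of_all _ fun ω => ?_)
    rw [Real.norm_of_nonneg (logdetG_nonneg 1 hP _ _)]
    exact logdetG_one_le hP _ _
  induction M with
  | zero => simp [logdetG_zero]
  | succ M ih =>
    have hshift := identDistrib_logdetG_shift ha_meas hb_meas ha_law hb_law h_indep 1 M P
    refine (ih.add (hshift.integrable_iff.mpr hone)).mono' (hmeas _ P).aestronglyMeasurable
      (ae_of_all _ fun ω => ?_)
    rw [Real.norm_of_nonneg (logdetG_nonneg _ hP _ _)]
    exact logdetG_add_le M 1 hP _ _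

end Channel

theorem statement0_general
    {Ω : Type*} [MeasureSpace Ω]
    (πa πb : Measure ℂ)
    (a b : ℕ → Ω → ℂ)
    (ha_meas : ∀ n, Measurable (a n)) (hb_meas : ∀ n, Measurable (b n))
    (ha_law : ∀ n, Measure.map (a n) ℙ = πa)
    (hb_law : ∀ n, Measure.map (b n) ℙ = πb)
    (h_indep : iIndepFun (Sum.elim a b) ℙ)
    -- (H1)
    (H1a : Integrable (fun x : ℂ => (Real.log ‖x‖) ^ 2) πa)
    (H1b : Integrable (fun x : ℂ => (Real.log ‖x‖) ^ 2) πb)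
    (P : ℝ) (hP : 0 < P) :
    ∃ L : ℝ, Tendsto
      (fun M : ℕ =>
        (1 / (M : ℝ)) *
          ∫ ω, logdetG M P (fun n => a n ω) (fun n => b n ω) ∂ℙ)
      atTop (nhds L) := by
  set u : ℕ → ℝ := fun M => ∫ ω, logdetG M P (fun n => a n ω) (fun n => b n ω) ∂ℙ
  have hint := integrable_logdetG ha_meas hb_meas ha_law hb_law h_indep H1a H1b hP.le
  have hshift := identDistrib_logdetG_shift ha_meas hb_meas ha_law hb_law h_indep
  have hsub : Subadditive u := fun M N => by
    have hint' := (hshift N M P).integrable_iff.mpr (hint N)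
    calc u (M + N)
        ≤ ∫ ω, (logdetG M P (fun n => a n ω) (fun n => b n ω)
            + logdetG N P (fun n => a (M + n) ω) (fun n => b (M + n) ω)) ∂ℙ :=
          integral_mono (hint _) ((hint M).add hint') fun ω => logdetG_add_le M N hP.le _ _
      _ = u M + u N := by rw [integral_add (hint M) hint', (hshift N M P).integral_eq]
  have hbdd : BddBelow (Set.range fun M => u M / M) := ⟨0, by
    rintro _ ⟨M, rfl⟩
    exact div_nonneg (integral_nonneg fun ω => logdetG_nonneg M hP.le _ _) M.cast_nonneg⟩
  exact ⟨hsub.lim, (hsub.tendsto_lim hbdd).congr fun M => by simp [u, div_eq_inv_mul]⟩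

theorem statement0
    {Ω : Type*} [MeasureSpace Ω] [IsProbabilityMeasure (ℙ : Measure Ω)]
    (πa πb : Measure ℂ) [IsProbabilityMeasure πa] [IsProbabilityMeasure πb]
    (a b : ℕ → Ω → ℂ)
    (ha_meas : ∀ n, Measurable (a n)) (hb_meas : ∀ n, Measurable (b n))
    (ha_law : ∀ n, Measure.map (a n) ℙ = πa)
    (hb_law : ∀ n, Measure.map (b n) ℙ = πb)
    (h_indep : iIndepFun (Sum.elim a b) ℙ)
    -- (H1)
    (H1a : Integrable (fun x : ℂ => (Real.log ‖x‖) ^ 2) πa)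
    (H1b : Integrable (fun x : ℂ => (Real.log ‖x‖) ^ 2) πb)
    -- (H2)
    (H2a : πa ≪ (volume : Measure ℂ)) (H2b : πb ≪ (volume : Measure ℂ))
    (P : ℝ) (hP : 0 < P) :
    ∃ L : ℝ, Tendsto
      (fun M : ℕ =>
        (1 / (M : ℝ)) *
          ∫ ω, logdetG M P (fun n => a n ω) (fun n => b n ω) ∂ℙ)
      atTop (nhds L) :=
  statement0_general πa πb a b ha_meas hb_meas ha_law hb_law h_indep H1a H1b P hP
end

section
/- With π_a = π_b = π a probability measure on ℂ with finite second moment, m₁ = ∫ x dπ(x) and m₂ = ∫ |x|² dπ(x), set A = 1 + 2Pm₂ and B = (P²/K)·(m₂² + (K−1)|m₁|⁴). Then E[det G_1] = A, E[det G_2] = A² − B, and for every m ≥ 3, E[det G_m] = A·E[det G_{m−1}] − B·E[det G_{m−2}], where G_m denotes the leading principal m × m submatrix of G_M (for any M ≥ m). -/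
/-!
`G_m` is tridiagonal, with diagonal entries `1 + ρ (|a_i|² + |b_i|²)`, superdiagonal entries
`ρ ⟨a_{i+1}; b_i⟩` and their conjugates below, where `ρ = P / K`. Expanding along the last row,
`det G_m = d_m det G_{m-1} - |u_{m-1}|² det G_{m-2}`. The factor `d_m` only involves `a_m, b_m`
and `|u_{m-1}|²` only involves `a_m, b_{m-1}`, while `det G_{m-1}` (resp. `det G_{m-2}`) is a
function of the vectors of index `≤ m-1` (resp. `≤ m-2`); so each product has the product of the
expectations as its expectation. Finally `E d_m = 1 + 2 K ρ m₂ = A`, and for independent vectors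
`E |⟨a; b⟩|² = K m₂² + K (K - 1) |m₁|⁴`, so `E |u_{m-1}|² = B`.
-/

open MeasureTheory ProbabilityTheory Filter Matrix

/-- The `M × K(M+1)` two-block-diagonal channel matrix built from the fading
vectors `a`, `b` (indexed from `1` as in the paper); the column index set
`Fin (M+1) × Fin K` encodes the `M+1` blocks of `K` columns. -/
def HmatK (K M : ℕ) (a b : ℕ → Fin K → ℂ) :
    Matrix (Fin M) (Fin (M + 1) × Fin K) ℂ :=
  fun i jk =>
    if (jk.1 : ℕ) = (i : ℕ) then a ((i : ℕ) + 1) jk.2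
    else if (jk.1 : ℕ) = (i : ℕ) + 1 then b ((i : ℕ) + 1) jk.2 else 0

/-- `det (I_m + (P/K) · H_m H_m*)`, the determinant of the leading principal
`m × m` submatrix `G_m` (which depends only on `a_1,…,a_m`, `b_1,…,b_m`). -/
noncomputable def detGK (K m : ℕ) (P : ℝ) (a b : ℕ → Fin K → ℂ) : ℂ :=
  Matrix.det (1 + ((P / K : ℝ) : ℂ) • (HmatK K m a b * (HmatK K m a b)ᴴ))

open ComplexConjugate

namespace ChannelGram

section Tridiagonal

variable {R : Type*}

def tridiag [Zero R] (d u l : ℕ → R) (n : ℕ) : Matrix (Fin n) (Fin n) R :=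
  Matrix.of fun i j =>
    if (i : ℕ) = j then d i else if (i : ℕ) + 1 = j then u i else if (j : ℕ) + 1 = i then l j else 0

lemma tridiag_apply_eq_zero [Zero R] (d u l : ℕ → R) {n : ℕ} {i j : Fin n}
    (h : (i : ℕ) + 1 < j ∨ (j : ℕ) + 1 < i) : tridiag d u l n i j = 0 := by
  simp only [tridiag, of_apply]
  split_ifs <;> first | rfl | omega

variable [CommRing R]

lemma det_succ_column_last_of_eq_zero {n : ℕ} (M : Matrix (Fin (n + 1)) (Fin (n + 1)) R)
    (hM : ∀ i : Fin n, M i.castSucc (Fin.last n) = 0) :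
    M.det = M (Fin.last n) (Fin.last n) * (M.submatrix Fin.castSucc Fin.castSucc).det := by
  rw [det_succ_column M (Fin.last n), Fin.sum_univ_castSucc]
  simp [hM, ← two_mul, pow_mul]

variable (d u l : ℕ → R)

lemma tridiag_submatrix_castSucc (n : ℕ) :
    (tridiag d u l (n + 1)).submatrix Fin.castSucc Fin.castSucc = tridiag d u l n := by
  ext i j
  simp [tridiag]

lemma det_tridiag_succ_succ (n : ℕ) :
    (tridiag d u l (n + 2)).det
      = d (n + 1) * (tridiag d u l (n + 1)).det - u n * l n * (tridiag d u l n).det := by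
  set T := tridiag d u l (n + 2)
  have hminor : (T.submatrix (Fin.last (n + 1)).succAbove (Fin.last n).castSucc.succAbove).det
      = u n * (tridiag d u l n).det := by
    rw [det_succ_column_last_of_eq_zero]
    · congr 1
      · simp [T, tridiag, Fin.succAbove]
      · congr 1
        ext i j
        simp [T, tridiag, Fin.succAbove, Fin.lt_def]
    · intro i
      simp only [submatrix_apply, Fin.succAbove_last, Fin.succAbove_castSucc_self, Fin.succ_last]
      exact tridiag_apply_eq_zero d u l (Or.inl (by simp))
  have hrow : ∀ j : Fin n, T (Fin.last (n + 1)) j.castSucc.castSucc = 0 := fun j =>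
    tridiag_apply_eq_zero d u l (Or.inr (by simp))
  have hd : T (Fin.last (n + 1)) (Fin.last (n + 1)) = d (n + 1) := by simp [T, tridiag]
  have hl : T (Fin.last (n + 1)) (Fin.last n).castSucc = l n := by
    simp only [T, tridiag, of_apply, Fin.val_last, Fin.val_castSucc]
    rw [if_neg (by omega), if_neg (by omega), if_pos trivial]
  rw [det_succ_row T (Fin.last (n + 1)), Fin.sum_univ_castSucc, Fin.sum_univ_castSucc, hminor,
    Finset.sum_eq_zero fun j _ => by rw [hrow, mul_zero, zero_mul], Fin.succAbove_last,
    tridiag_submatrix_castSucc, hd, hl]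
  simp only [Fin.val_last, Fin.val_castSucc, odd_add_one_self, Odd.neg_one_pow, ← two_mul,
    pow_mul, even_two, Even.neg_pow, one_pow]
  ring

end Tridiagonal

section BlockRow

variable {R ι γ κ : Type*}

def blockRow [Zero R] [DecidableEq γ] (σ : ι → γ) (x : ι → κ → R) : Matrix ι (γ × κ) R :=
  Matrix.of fun i ck => if ck.1 = σ i then x i ck.2 else 0

lemma blockRow_mul_conjTranspose [CommSemiring R] [StarRing R] [Fintype γ] [DecidableEq γ]
    [Fintype κ] (σ τ : ι → γ) (x y : ι → κ → R) :
    blockRow σ x * (blockRow τ y)ᴴ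
      = Matrix.of fun i j => if σ i = τ j then x i ⬝ᵥ star (y j) else 0 := by
  ext i j
  simp only [blockRow, mul_apply, of_apply, conjTranspose_apply, ite_mul, zero_mul,
    Fintype.sum_prod_type, Finset.sum_ite_irrel, Finset.sum_const_zero, Finset.sum_ite_eq',
    Finset.mem_univ, ↓reduceIte, dotProduct, Pi.star_apply]
  split_ifs <;> simp

end BlockRow

section Gram

variable {K : ℕ}

def gramDiag (ρ : ℂ) (a b : ℕ → Fin K → ℂ) (i : ℕ) : ℂ :=
  1 + ρ * (a (i + 1) ⬝ᵥ star (a (i + 1)) + b (i + 1) ⬝ᵥ star (b (i + 1)))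

def gramSuperdiag (ρ : ℂ) (a b : ℕ → Fin K → ℂ) (i : ℕ) : ℂ := ρ * (b (i + 1) ⬝ᵥ star (a (i + 2)))

def gramSubdiag (ρ : ℂ) (a b : ℕ → Fin K → ℂ) (i : ℕ) : ℂ := ρ * (a (i + 2) ⬝ᵥ star (b (i + 1)))

def gramTridiag (ρ : ℂ) (a b : ℕ → Fin K → ℂ) (n : ℕ) : Matrix (Fin n) (Fin n) ℂ :=
  tridiag (gramDiag ρ a b) (gramSuperdiag ρ a b) (gramSubdiag ρ a b) n

lemma gramSuperdiag_mul_gramSubdiag (ρ : ℂ) (a b : ℕ → Fin K → ℂ) (i : ℕ) :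
    gramSuperdiag ρ a b i * gramSubdiag ρ a b i
      = ρ ^ 2 * ((b (i + 1) ⬝ᵥ star (a (i + 2))) * (a (i + 2) ⬝ᵥ star (b (i + 1)))) := by
  rw [gramSuperdiag, gramSubdiag]
  ring

lemma det_gramTridiag_one (ρ : ℂ) (a b : ℕ → Fin K → ℂ) :
    (gramTridiag ρ a b 1).det = gramDiag ρ a b 0 := by
  simp [gramTridiag, tridiag]

lemma HmatK_eq_add (m : ℕ) (a b : ℕ → Fin K → ℂ) :
    HmatK K m a b
      = blockRow Fin.castSucc (fun i => a (i + 1)) + blockRow Fin.succ (fun i => b (i + 1)) := by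
  ext i ⟨c, k⟩
  simp only [HmatK, blockRow, Matrix.add_apply, of_apply, Fin.ext_iff, Fin.val_castSucc,
    Fin.val_succ]
  grind

lemma one_add_smul_HmatK_mul_conjTranspose (m : ℕ) (ρ : ℂ) (a b : ℕ → Fin K → ℂ) :
    1 + ρ • (HmatK K m a b * (HmatK K m a b)ᴴ) = gramTridiag ρ a b m := by
  simp only [HmatK_eq_add, conjTranspose_add, Matrix.add_mul, Matrix.mul_add,
    blockRow_mul_conjTranspose]
  ext i j
  simp only [gramTridiag, tridiag, gramDiag, gramSuperdiag, gramSubdiag, Matrix.add_apply,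
    Matrix.smul_apply, one_apply, of_apply, Fin.ext_iff, Fin.val_castSucc, Fin.val_succ,
    smul_eq_mul]
  generalize (i : ℕ) = p, (j : ℕ) = q
  split_ifs <;> subst_vars <;> first | omega | ring

lemma detGK_eq_det_gramTridiag (m : ℕ) (P : ℝ) (a b : ℕ → Fin K → ℂ) :
    detGK K m P a b = (gramTridiag ((P / K : ℝ) : ℂ) a b m).det := by
  rw [detGK, one_add_smul_HmatK_mul_conjTranspose]

end Gram

section Independence

variable {Ω ι β : Type*} [MeasurableSpace β]

abbrev comapSup (f : ι → Ω → β) (S : Set ι) : MeasurableSpace Ω :=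
  ⨆ i ∈ S, MeasurableSpace.comap (f i) inferInstance

lemma measurable_comapSup_of_mem (f : ι → Ω → β) {S : Set ι} {i : ι} (hi : i ∈ S) :
    Measurable[comapSup f S] (f i) :=
  measurable_iff_comap_le.2 <|
    le_iSup₂ (f := fun i (_ : i ∈ S) => MeasurableSpace.comap (f i) inferInstance) i hi

variable [MeasurableSpace Ω] {μ : Measure Ω}

lemma indep_comapSup_of_disjoint {f : ι → Ω → β} (hf : iIndepFun f μ)
    (hmeas : ∀ i, Measurable (f i)) {S T : Set ι} (hST : Disjoint S T) :
    Indep (comapSup f S) (comapSup f T) μ :=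
  indep_iSup_of_disjoint (fun i => (hmeas i).comap_le) hf.iIndep hST

lemma _root_.ProbabilityTheory.Indep.indepFun_of_measurable {γ : Type*} [MeasurableSpace γ]
    {m₁ m₂ : MeasurableSpace Ω} {f : Ω → β} {g : Ω → γ}
    (h : Indep m₁ m₂ μ) (hf : Measurable[m₁] f) (hg : Measurable[m₂] g) : IndepFun f g μ :=
  indep_of_indep_of_le h hf.comap_le hg.comap_le

lemma integrable_of_indep_recurrence {F d c : ℕ → Ω → ℂ}
    (hrec : ∀ n, F (n + 2) = d (n + 1) * F (n + 1) - c n * F n)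
    (hF0 : Integrable (F 0) μ) (hF1 : Integrable (F 1) μ)
    (hd : ∀ n, Integrable (d n) μ) (hc : ∀ n, Integrable (c n) μ)
    (hdF : ∀ n, IndepFun (d (n + 1)) (F (n + 1)) μ) (hcF : ∀ n, IndepFun (c n) (F n) μ) :
    ∀ n, Integrable (F n) μ := by
  intro n
  induction n using Nat.twoStepInduction with
  | zero => exact hF0
  | one => exact hF1
  | more n ih₀ ih₁ =>
    rw [hrec]
    exact ((hdF n).integrable_mul (hd _) ih₁).sub ((hcF n).integrable_mul (hc _) ih₀)

lemma integral_of_indep_recurrence {F d c : ℕ → Ω → ℂ}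
    (hrec : ∀ n, F (n + 2) = d (n + 1) * F (n + 1) - c n * F n)
    (hF0 : Integrable (F 0) μ) (hF1 : Integrable (F 1) μ)
    (hd : ∀ n, Integrable (d n) μ) (hc : ∀ n, Integrable (c n) μ)
    (hdF : ∀ n, IndepFun (d (n + 1)) (F (n + 1)) μ) (hcF : ∀ n, IndepFun (c n) (F n) μ) (n : ℕ) :
    μ[F (n + 2)] = μ[d (n + 1)] * μ[F (n + 1)] - μ[c n] * μ[F n] := by
  have hF := integrable_of_indep_recurrence hrec hF0 hF1 hd hc hdF hcF
  rw [hrec, integral_sub' ((hdF n).integrable_mul (hd _) (hF _))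
      ((hcF n).integrable_mul (hc _) (hF _)),
    (hdF n).integral_mul_eq_mul_integral (hd _).1 (hF _).1,
    (hcF n).integral_mul_eq_mul_integral (hc _).1 (hF _).1]

end Independence

section Moments

variable {Ω ι : Type*} [MeasurableSpace Ω] {μ : Measure Ω} {π : Measure ℂ}

lemma memLp_two_of_map_eq {g : Ω → ℂ} (hg : Measurable g) (hlaw : μ.map g = π)
    (hmom : Integrable (fun x : ℂ => ‖x‖ ^ 2) π) : MemLp g 2 μ := by
  rw [memLp_two_iff_integrable_sq_norm hg.aestronglyMeasurable]
  rw [← hlaw] at hmom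
  exact (integrable_map_measure (by fun_prop) hg.aemeasurable).1 hmom

lemma integrable_mul_conj_of_map_eq {g h : Ω → ℂ} (hg : Measurable g) (hh : Measurable h)
    (hlaw_g : μ.map g = π) (hlaw_h : μ.map h = π) (hmom : Integrable (fun x : ℂ => ‖x‖ ^ 2) π) :
    Integrable (fun ω => g ω * conj (h ω)) μ :=
  (memLp_two_of_map_eq hg hlaw_g hmom).integrable_mul (memLp_two_of_map_eq hh hlaw_h hmom).star

lemma integral_mul_conj_of_iIndepFun [DecidableEq ι] {f : ι → Ω → ℂ} (hf : iIndepFun f μ)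
    (hmeas : ∀ i, Measurable (f i)) (hlaw : ∀ i, μ.map (f i) = π) (i j : ι) :
    ∫ ω, f i ω * conj (f j ω) ∂μ
      = ((if i = j then ∫ x, ‖x‖ ^ 2 ∂π else ‖∫ x, x ∂π‖ ^ 2 : ℝ) : ℂ) := by
  split_ifs with hij
  · subst hij
    simp_rw [Complex.mul_conj', ← Complex.ofReal_pow, integral_complex_ofReal, ← hlaw i,
      integral_map (hmeas i).aemeasurable
        (by fun_prop : AEStronglyMeasurable (fun x : ℂ => ‖x‖ ^ 2) _)]
  · have hmean : ∀ i, ∫ ω, f i ω ∂μ = ∫ x, x ∂π := fun i => by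
      rw [← hlaw i]
      exact (integral_map (hmeas i).aemeasurable aestronglyMeasurable_id).symm
    have hind : IndepFun (f i) (fun ω => conj (f j ω)) μ :=
      (hf.indepFun hij).comp measurable_id Complex.continuous_conj.measurable
    rw [hind.integral_fun_mul_eq_mul_integral (hmeas i).aestronglyMeasurable
      (hmeas j).aestronglyMeasurable.star, integral_conj, hmean, hmean, Complex.mul_conj',
      Complex.ofReal_pow]

lemma sum_sum_ite_mul_ite {R κ : Type*} [CommRing R] [Fintype κ] [DecidableEq κ] (x y : R) :
    ∑ k : κ, ∑ l : κ, (if k = l then x else y) * (if l = k then x else y)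
      = Fintype.card κ * (x ^ 2 + (Fintype.card κ - 1) * y ^ 2) := by
  have hterm : ∀ k l : κ, (if k = l then x else y) * (if l = k then x else y)
      = y ^ 2 + if k = l then x ^ 2 - y ^ 2 else 0 := fun k l => by
    by_cases h : k = l
    · subst h; simp only [↓reduceIte, add_sub_cancel, sq]
    · simp only [h, ↓reduceIte, Ne.symm h, add_zero, sq]
  simp only [hterm, Finset.sum_add_distrib, Finset.sum_ite_eq, Finset.mem_univ, if_true,
    Finset.sum_const, Finset.card_univ, nsmul_eq_mul]
  ring

lemma indepFun_mul_conj_of_disjoint {f : ι → Ω → ℂ} (hf : iIndepFun f μ)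
    (hmeas : ∀ i, Measurable (f i)) {S T : Set ι} (hST : Disjoint S T) {i j i' j' : ι}
    (hi : i ∈ S) (hj : j ∈ S) (hi' : i' ∈ T) (hj' : j' ∈ T) :
    IndepFun (fun ω => f i ω * conj (f j ω)) (fun ω => f i' ω * conj (f j' ω)) μ :=
  (indep_comapSup_of_disjoint hf hmeas hST).indepFun_of_measurable
    ((measurable_comapSup_of_mem f hi).mul
      (Complex.continuous_conj.measurable.comp (measurable_comapSup_of_mem f hj)))
    ((measurable_comapSup_of_mem f hi').mul
      (Complex.continuous_conj.measurable.comp (measurable_comapSup_of_mem f hj')))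

lemma integrable_mul_conj_mul_mul_conj_of_disjoint {f : ι → Ω → ℂ} (hf : iIndepFun f μ)
    (hmeas : ∀ i, Measurable (f i)) (hlaw : ∀ i, μ.map (f i) = π)
    (hmom : Integrable (fun x : ℂ => ‖x‖ ^ 2) π) {S T : Set ι} (hST : Disjoint S T)
    {i j i' j' : ι} (hi : i ∈ S) (hj : j ∈ S) (hi' : i' ∈ T) (hj' : j' ∈ T) :
    Integrable (fun ω => f i ω * conj (f j ω) * (f i' ω * conj (f j' ω))) μ :=
  (indepFun_mul_conj_of_disjoint hf hmeas hST hi hj hi' hj').integrable_mul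
    (integrable_mul_conj_of_map_eq (hmeas _) (hmeas _) (hlaw _) (hlaw _) hmom)
    (integrable_mul_conj_of_map_eq (hmeas _) (hmeas _) (hlaw _) (hlaw _) hmom)

lemma dotProduct_star_mul_dotProduct_star {R κ : Type*} [CommSemiring R] [StarRing R] [Fintype κ]
    (v w : κ → R) :
    (v ⬝ᵥ star w) * (w ⬝ᵥ star v) = ∑ k, ∑ l, v k * star (v l) * (w l * star (w k)) := by
  simp only [dotProduct, Pi.star_apply, Finset.sum_mul_sum]
  exact Finset.sum_congr rfl fun k _ => Finset.sum_congr rfl fun l _ => by ring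

variable {K : ℕ}

lemma integrable_dotProduct_star {f : ι → Ω → ℂ} (hmeas : ∀ i, Measurable (f i))
    (hlaw : ∀ i, μ.map (f i) = π) (hmom : Integrable (fun x : ℂ => ‖x‖ ^ 2) π) (e e' : Fin K → ι) :
    Integrable (fun ω => (fun k => f (e k) ω) ⬝ᵥ star (fun k => f (e' k) ω)) μ :=
  integrable_finsetSum _ fun _ _ =>
    integrable_mul_conj_of_map_eq (hmeas _) (hmeas _) (hlaw _) (hlaw _) hmom

lemma integral_dotProduct_star_self {f : ι → Ω → ℂ} (hf : iIndepFun f μ)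
    (hmeas : ∀ i, Measurable (f i)) (hlaw : ∀ i, μ.map (f i) = π)
    (hmom : Integrable (fun x : ℂ => ‖x‖ ^ 2) π) (e : Fin K → ι) :
    ∫ ω, (fun k => f (e k) ω) ⬝ᵥ star (fun k => f (e k) ω) ∂μ = K * ∫ x, ‖x‖ ^ 2 ∂π := by
  classical
  simp only [dotProduct, Pi.star_apply, Complex.star_def]
  rw [integral_finsetSum _ fun k _ =>
    integrable_mul_conj_of_map_eq (hmeas _) (hmeas _) (hlaw _) (hlaw _) hmom]
  simp [integral_mul_conj_of_iIndepFun hf hmeas hlaw]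

lemma integrable_dotProduct_star_mul_dotProduct_star {f : ι → Ω → ℂ} (hf : iIndepFun f μ)
    (hmeas : ∀ i, Measurable (f i)) (hlaw : ∀ i, μ.map (f i) = π)
    (hmom : Integrable (fun x : ℂ => ‖x‖ ^ 2) π) {e e' : Fin K → ι}
    (hdisj : Disjoint (Set.range e) (Set.range e')) :
    Integrable (fun ω => ((fun k => f (e k) ω) ⬝ᵥ star (fun k => f (e' k) ω))
      * ((fun k => f (e' k) ω) ⬝ᵥ star (fun k => f (e k) ω))) μ := by
  simp_rw [dotProduct_star_mul_dotProduct_star, Complex.star_def]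
  exact integrable_finsetSum _ fun k _ => integrable_finsetSum _ fun l _ =>
    integrable_mul_conj_mul_mul_conj_of_disjoint hf hmeas hlaw hmom hdisj
      ⟨k, rfl⟩ ⟨l, rfl⟩ ⟨l, rfl⟩ ⟨k, rfl⟩

lemma integral_dotProduct_star_mul_dotProduct_star {f : ι → Ω → ℂ}
    (hf : iIndepFun f μ) (hmeas : ∀ i, Measurable (f i)) (hlaw : ∀ i, μ.map (f i) = π)
    (hmom : Integrable (fun x : ℂ => ‖x‖ ^ 2) π) {e e' : Fin K → ι} (he : e.Injective)
    (he' : e'.Injective) (hdisj : Disjoint (Set.range e) (Set.range e')) :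
    ∫ ω, ((fun k => f (e k) ω) ⬝ᵥ star (fun k => f (e' k) ω))
      * ((fun k => f (e' k) ω) ⬝ᵥ star (fun k => f (e k) ω)) ∂μ
      = K * ((∫ x, ‖x‖ ^ 2 ∂π) ^ 2 + (K - 1) * ‖∫ x, x ∂π‖ ^ 4 : ℝ) := by
  classical
  have hint : ∀ k l, Integrable
      (fun ω => f (e k) ω * conj (f (e l) ω) * (f (e' l) ω * conj (f (e' k) ω))) μ := fun k l =>
    integrable_mul_conj_mul_mul_conj_of_disjoint hf hmeas hlaw hmom hdisj
      ⟨k, rfl⟩ ⟨l, rfl⟩ ⟨l, rfl⟩ ⟨k, rfl⟩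
  have hfac : ∀ k l, ∫ ω, f (e k) ω * conj (f (e l) ω) * (f (e' l) ω * conj (f (e' k) ω)) ∂μ
      = (∫ ω, f (e k) ω * conj (f (e l) ω) ∂μ) * ∫ ω, f (e' l) ω * conj (f (e' k) ω) ∂μ :=
    fun k l => (indepFun_mul_conj_of_disjoint hf hmeas hdisj ⟨k, rfl⟩ ⟨l, rfl⟩ ⟨l, rfl⟩
      ⟨k, rfl⟩).integral_fun_mul_eq_mul_integral
        (integrable_mul_conj_of_map_eq (hmeas _) (hmeas _) (hlaw _) (hlaw _) hmom).1
        (integrable_mul_conj_of_map_eq (hmeas _) (hmeas _) (hlaw _) (hlaw _) hmom).1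
  simp_rw [dotProduct_star_mul_dotProduct_star, Complex.star_def]
  rw [integral_finsetSum _ fun k _ => integrable_finsetSum _ fun l _ => hint k l]
  simp only [integral_finsetSum _ fun l _ => hint _ l, hfac,
    integral_mul_conj_of_iIndepFun hf hmeas hlaw, he.eq_iff, he'.eq_iff,
    apply_ite (fun x : ℝ => (x : ℂ)), sum_sum_ite_mul_ite, Fintype.card_fin]
  push_cast
  ring

end Moments

section Channel

variable {Ω : Type*} {K : ℕ}

def fadingFamily (a b : ℕ → Fin K → Ω → ℂ) : (ℕ × Fin K) ⊕ (ℕ × Fin K) → Ω → ℂ :=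
  Sum.elim (fun p => a p.1 p.2) (fun p => b p.1 p.2)

def blockIndex : (ℕ × Fin K) ⊕ (ℕ × Fin K) → ℕ := Sum.elim Prod.fst Prod.fst

lemma measurable_det {m : MeasurableSpace Ω} {n : Type*} [Fintype n] [DecidableEq n]
    {M : Ω → Matrix n n ℂ} (hM : ∀ i j, Measurable[m] fun ω => M ω i j) :
    Measurable[m] fun ω => (M ω).det := by
  simp only [det_apply']
  exact Finset.measurable_sum _ fun σ _ =>
    (Finset.measurable_prod _ fun i _ => hM _ _).const_mul _

lemma measurable_dotProduct_star {m : MeasurableSpace Ω} {v w : Fin K → Ω → ℂ}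
    (hv : ∀ k, Measurable[m] (v k)) (hw : ∀ k, Measurable[m] (w k)) :
    Measurable[m] fun ω => (v · ω) ⬝ᵥ star (w · ω) :=
  Finset.measurable_sum _ fun k _ => (hv k).mul (Complex.continuous_conj.measurable.comp (hw k))

variable {m : MeasurableSpace Ω} (ρ : ℂ) {a b : ℕ → Fin K → Ω → ℂ}

lemma measurable_gramDiag {i : ℕ} (ha : ∀ k, Measurable[m] (a (i + 1) k))
    (hb : ∀ k, Measurable[m] (b (i + 1) k)) :
    Measurable[m] fun ω => gramDiag ρ (a · · ω) (b · · ω) i :=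
  measurable_const.add
    (((measurable_dotProduct_star ha ha).add (measurable_dotProduct_star hb hb)).const_mul ρ)

lemma measurable_gramSuperdiag {i : ℕ} (ha : ∀ k, Measurable[m] (a (i + 2) k))
    (hb : ∀ k, Measurable[m] (b (i + 1) k)) :
    Measurable[m] fun ω => gramSuperdiag ρ (a · · ω) (b · · ω) i :=
  (measurable_dotProduct_star hb ha).const_mul ρ

lemma measurable_gramSubdiag {i : ℕ} (ha : ∀ k, Measurable[m] (a (i + 2) k))
    (hb : ∀ k, Measurable[m] (b (i + 1) k)) :
    Measurable[m] fun ω => gramSubdiag ρ (a · · ω) (b · · ω) i :=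
  (measurable_dotProduct_star ha hb).const_mul ρ

lemma measurable_det_gramTridiag {n : ℕ} (ha : ∀ j ≤ n, ∀ k, Measurable[m] (a j k))
    (hb : ∀ j ≤ n, ∀ k, Measurable[m] (b j k)) :
    Measurable[m] fun ω => (gramTridiag ρ (a · · ω) (b · · ω) n).det := by
  refine measurable_det fun i j => ?_
  have := i.isLt
  have := j.isLt
  simp only [gramTridiag, tridiag, of_apply]
  split_ifs
  · exact measurable_gramDiag ρ (ha _ (by omega)) (hb _ (by omega))
  · exact measurable_gramSuperdiag ρ (ha _ (by omega)) (hb _ (by omega))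
  · exact measurable_gramSubdiag ρ (ha _ (by omega)) (hb _ (by omega))
  · exact measurable_const

lemma measurable_det_gramTridiag_past (n : ℕ) :
    Measurable[comapSup (fadingFamily a b) {x | blockIndex x ≤ n}]
      fun ω => (gramTridiag ρ (a · · ω) (b · · ω) n).det :=
  measurable_det_gramTridiag ρ
    (fun j hj k => measurable_comapSup_of_mem (fadingFamily a b) (i := .inl (j, k)) hj)
    (fun j hj k => measurable_comapSup_of_mem (fadingFamily a b) (i := .inr (j, k)) hj)

end Channel

section ChannelExpectation

variable {Ω : Type*} [MeasurableSpace Ω] {μ : Measure Ω} {π : Measure ℂ} {K : ℕ}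
  {a b : ℕ → Fin K → Ω → ℂ} (ρ : ℂ)

lemma integrable_gramDiag [IsFiniteMeasure μ] (hmeas : ∀ x, Measurable (fadingFamily a b x))
    (hlaw : ∀ x, μ.map (fadingFamily a b x) = π) (hmom : Integrable (fun x : ℂ => ‖x‖ ^ 2) π)
    (i : ℕ) : Integrable (fun ω => gramDiag ρ (a · · ω) (b · · ω) i) μ := by
  have ia := integrable_dotProduct_star hmeas hlaw hmom (fun k => .inl (i + 1, k))
    (fun k => .inl (i + 1, k))
  have ib := integrable_dotProduct_star hmeas hlaw hmom (fun k => .inr (i + 1, k))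
    (fun k => .inr (i + 1, k))
  simp only [fadingFamily, Sum.elim_inl, Sum.elim_inr] at ia ib
  exact (integrable_const 1).add ((ia.add ib).const_mul ρ)

lemma integral_gramDiag [IsProbabilityMeasure μ] (hf : iIndepFun (fadingFamily a b) μ)
    (hmeas : ∀ x, Measurable (fadingFamily a b x)) (hlaw : ∀ x, μ.map (fadingFamily a b x) = π)
    (hmom : Integrable (fun x : ℂ => ‖x‖ ^ 2) π) (i : ℕ) :
    ∫ ω, gramDiag ρ (a · · ω) (b · · ω) i ∂μ = 1 + 2 * K * ρ * ∫ x, ‖x‖ ^ 2 ∂π := by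
  have ia := integrable_dotProduct_star hmeas hlaw hmom (fun k => .inl (i + 1, k))
    (fun k => .inl (i + 1, k))
  have ib := integrable_dotProduct_star hmeas hlaw hmom (fun k => .inr (i + 1, k))
    (fun k => .inr (i + 1, k))
  have ha := integral_dotProduct_star_self hf hmeas hlaw hmom (fun k => .inl (i + 1, k))
  have hb := integral_dotProduct_star_self hf hmeas hlaw hmom (fun k => .inr (i + 1, k))
  simp only [fadingFamily, Sum.elim_inl, Sum.elim_inr] at ia ib ha hb
  simp only [gramDiag]
  rw [integral_add (integrable_const _) ?_, integral_const,
    integral_const_mul, integral_add ia ib, ha, hb]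
  · simp only [probReal_univ, one_smul, add_right_inj]
    ring
  · exact (ia.add ib).const_mul ρ

lemma integrable_gramSuperdiag_mul_gramSubdiag (hf : iIndepFun (fadingFamily a b) μ)
    (hmeas : ∀ x, Measurable (fadingFamily a b x)) (hlaw : ∀ x, μ.map (fadingFamily a b x) = π)
    (hmom : Integrable (fun x : ℂ => ‖x‖ ^ 2) π) (i : ℕ) :
    Integrable
      (fun ω => gramSuperdiag ρ (a · · ω) (b · · ω) i * gramSubdiag ρ (a · · ω) (b · · ω) i) μ := by
  have h := integrable_dotProduct_star_mul_dotProduct_star hf hmeas hlaw hmom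
    (e := fun k => .inr (i + 1, k)) (e' := fun k => .inl (i + 2, k)) (by simp [Set.disjoint_left])
  simp only [fadingFamily, Sum.elim_inl, Sum.elim_inr] at h
  simp_rw [gramSuperdiag_mul_gramSubdiag]
  exact h.const_mul _

lemma integral_gramSuperdiag_mul_gramSubdiag (hf : iIndepFun (fadingFamily a b) μ)
    (hmeas : ∀ x, Measurable (fadingFamily a b x)) (hlaw : ∀ x, μ.map (fadingFamily a b x) = π)
    (hmom : Integrable (fun x : ℂ => ‖x‖ ^ 2) π) (i : ℕ) :
    ∫ ω, gramSuperdiag ρ (a · · ω) (b · · ω) i * gramSubdiag ρ (a · · ω) (b · · ω) i ∂μ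
      = K * ρ ^ 2 * ((∫ x, ‖x‖ ^ 2 ∂π) ^ 2 + (K - 1) * ‖∫ x, x ∂π‖ ^ 4 : ℝ) := by
  have h := integral_dotProduct_star_mul_dotProduct_star hf hmeas hlaw hmom
    (e := fun k => .inr (i + 1, k)) (e' := fun k => .inl (i + 2, k))
    (fun k l hkl => by simpa using hkl) (fun k l hkl => by simpa using hkl)
    (by simp [Set.disjoint_left])
  simp only [fadingFamily, Sum.elim_inl, Sum.elim_inr] at h
  simp_rw [gramSuperdiag_mul_gramSubdiag]
  rw [integral_const_mul, h]
  ring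

lemma indep_future_past (hf : iIndepFun (fadingFamily a b) μ)
    (hmeas : ∀ x, Measurable (fadingFamily a b x)) (n : ℕ) :
    Indep (comapSup (fadingFamily a b) {x | n < blockIndex x})
      (comapSup (fadingFamily a b) {x | blockIndex x ≤ n}) μ :=
  indep_comapSup_of_disjoint hf hmeas <|
    Set.disjoint_left.2 fun _ h₁ h₂ => lt_irrefl n (lt_of_lt_of_le h₁ h₂)

lemma indepFun_gramDiag_det (hf : iIndepFun (fadingFamily a b) μ)
    (hmeas : ∀ x, Measurable (fadingFamily a b x)) (n : ℕ) :
    IndepFun (fun ω => gramDiag ρ (a · · ω) (b · · ω) (n + 1))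
      (fun ω => (gramTridiag ρ (a · · ω) (b · · ω) (n + 1)).det) μ :=
  (indep_future_past hf hmeas (n + 1)).indepFun_of_measurable
    (measurable_gramDiag ρ
      (fun k => measurable_comapSup_of_mem (fadingFamily a b) (i := .inl (n + 2, k))
        (Nat.lt_succ_self _))
      (fun k => measurable_comapSup_of_mem (fadingFamily a b) (i := .inr (n + 2, k))
        (Nat.lt_succ_self _)))
    (measurable_det_gramTridiag_past ρ (n + 1))

lemma indepFun_gramSuperdiag_mul_gramSubdiag_det (hf : iIndepFun (fadingFamily a b) μ)
    (hmeas : ∀ x, Measurable (fadingFamily a b x)) (n : ℕ) :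
    IndepFun (fun ω => gramSuperdiag ρ (a · · ω) (b · · ω) n * gramSubdiag ρ (a · · ω) (b · · ω) n)
      (fun ω => (gramTridiag ρ (a · · ω) (b · · ω) n).det) μ := by
  have ha : ∀ k, Measurable[comapSup (fadingFamily a b) {x | n < blockIndex x}] (a (n + 2) k) :=
    fun k => measurable_comapSup_of_mem (fadingFamily a b) (i := .inl (n + 2, k))
      (show n < n + 2 by omega)
  have hb : ∀ k, Measurable[comapSup (fadingFamily a b) {x | n < blockIndex x}] (b (n + 1) k) :=
    fun k => measurable_comapSup_of_mem (fadingFamily a b) (i := .inr (n + 1, k))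
      (Nat.lt_succ_self _)
  exact (indep_future_past hf hmeas n).indepFun_of_measurable
    ((measurable_gramSuperdiag ρ ha hb).mul (measurable_gramSubdiag ρ ha hb))
    (measurable_det_gramTridiag_past ρ n)

theorem integral_det_gramTridiag_succ_succ [IsProbabilityMeasure μ]
    (hf : iIndepFun (fadingFamily a b) μ) (hmeas : ∀ x, Measurable (fadingFamily a b x))
    (hlaw : ∀ x, μ.map (fadingFamily a b x) = π) (hmom : Integrable (fun x : ℂ => ‖x‖ ^ 2) π)
    (n : ℕ) :
    ∫ ω, (gramTridiag ρ (a · · ω) (b · · ω) (n + 2)).det ∂μ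
      = (1 + 2 * K * ρ * ∫ x, ‖x‖ ^ 2 ∂π)
          * ∫ ω, (gramTridiag ρ (a · · ω) (b · · ω) (n + 1)).det ∂μ
        - K * ρ ^ 2 * ((∫ x, ‖x‖ ^ 2 ∂π) ^ 2 + (K - 1) * ‖∫ x, x ∂π‖ ^ 4 : ℝ)
          * ∫ ω, (gramTridiag ρ (a · · ω) (b · · ω) n).det ∂μ := by
  rw [← integral_gramDiag ρ hf hmeas hlaw hmom (n + 1),
    ← integral_gramSuperdiag_mul_gramSubdiag ρ hf hmeas hlaw hmom n]
  refine integral_of_indep_recurrence (F := fun n ω => (gramTridiag ρ (a · · ω) (b · · ω) n).det)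
    (d := fun i ω => gramDiag ρ (a · · ω) (b · · ω) i)
    (c := fun i ω => gramSuperdiag ρ (a · · ω) (b · · ω) i * gramSubdiag ρ (a · · ω) (b · · ω) i)
    (fun n => funext fun ω => det_tridiag_succ_succ _ _ _ n) ?_ ?_
    (integrable_gramDiag ρ hmeas hlaw hmom)
    (integrable_gramSuperdiag_mul_gramSubdiag ρ hf hmeas hlaw hmom)
    (indepFun_gramDiag_det ρ hf hmeas) (indepFun_gramSuperdiag_mul_gramSubdiag_det ρ hf hmeas) n
  · simp
  · simpa only [det_gramTridiag_one] using integrable_gramDiag ρ hmeas hlaw hmom 0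

end ChannelExpectation

end ChannelGram

open ChannelGram

theorem statement8_general
    {Ω : Type*} [MeasureSpace Ω] [IsProbabilityMeasure (ℙ : Measure Ω)]
    (K : ℕ) (hK : 1 ≤ K) (P : ℝ)
    (π : Measure ℂ)
    (hmom : Integrable (fun x : ℂ => ‖x‖ ^ 2) π)
    (a b : ℕ → Fin K → Ω → ℂ)
    (ha_meas : ∀ n k, Measurable (a n k)) (hb_meas : ∀ n k, Measurable (b n k))
    (ha_law : ∀ n k, Measure.map (a n k) ℙ = π)
    (hb_law : ∀ n k, Measure.map (b n k) ℙ = π)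
    (h_indep : iIndepFun
      (Sum.elim (fun p : ℕ × Fin K => a p.1 p.2) (fun p : ℕ × Fin K => b p.1 p.2)) ℙ)
    -- the moments and the constants A, B
    (m1 : ℂ) (hm1 : m1 = ∫ x, x ∂π)
    (m2 : ℝ) (hm2 : m2 = ∫ x, ‖x‖ ^ 2 ∂π)
    (A B : ℝ)
    (hA : A = 1 + 2 * P * m2)
    (hB : B = P ^ 2 / K * (m2 ^ 2 + (K - 1 : ℝ) * ‖m1‖ ^ 4))
    -- `D m = E[det G_m]`
    (D : ℕ → ℂ)
    (hD : ∀ m : ℕ,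
      D m = ∫ ω, detGK K m P (fun n k => a n k ω) (fun n k => b n k ω) ∂ℙ) :
    D 1 = (A : ℂ) ∧ D 2 = (A : ℂ) ^ 2 - (B : ℂ) ∧
      ∀ m : ℕ, 3 ≤ m → D m = (A : ℂ) * D (m - 1) - (B : ℂ) * D (m - 2) := by
  obtain ⟨ρ, hρ⟩ : ∃ ρ : ℂ, ρ = ((P / K : ℝ) : ℂ) := ⟨_, rfl⟩
  have hK₀ : (K : ℂ) ≠ 0 := by exact_mod_cast (by omega : K ≠ 0)
  have hmeas : ∀ x, Measurable (fadingFamily a b x) :=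
    Sum.rec (fun p => ha_meas p.1 p.2) (fun p => hb_meas p.1 p.2)
  have hlaw : ∀ x, Measure.map (fadingFamily a b x) ℙ = π :=
    Sum.rec (fun p => ha_law p.1 p.2) (fun p => hb_law p.1 p.2)
  have hA' : (A : ℂ) = 1 + 2 * K * ρ * ∫ x, ‖x‖ ^ 2 ∂π := by
    rw [hA, hρ, ← hm2]; push_cast; field_simp
  have hB' : (B : ℂ) = K * ρ ^ 2 * ((∫ x, ‖x‖ ^ 2 ∂π) ^ 2 + (K - 1) * ‖∫ x, x ∂π‖ ^ 4 : ℝ) := by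
    rw [hB, hρ, ← hm1, ← hm2]; push_cast; field_simp
  have hDE : ∀ m, D m = ∫ ω, (gramTridiag ρ (a · · ω) (b · · ω) m).det := fun m => by
    simp only [hD, detGK_eq_det_gramTridiag, ← hρ]
  have hD0 : D 0 = 1 := by simp [hDE]
  have hD1 : D 1 = A := by
    simp only [hDE, det_gramTridiag_one, hA']
    exact integral_gramDiag ρ h_indep hmeas hlaw hmom 0
  have hrec : ∀ n, D (n + 2) = A * D (n + 1) - B * D n := fun n => by
    simp only [hDE, hA', hB']
    exact integral_det_gramTridiag_succ_succ ρ h_indep hmeas hlaw hmom n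
  refine ⟨hD1, by rw [hrec 0, hD1, hD0, sq, mul_one], fun m hm => ?_⟩
  obtain ⟨n, rfl⟩ : ∃ n, m = n + 2 := ⟨m - 2, by omega⟩
  exact hrec n

theorem statement8
    {Ω : Type*} [MeasureSpace Ω] [IsProbabilityMeasure (ℙ : Measure Ω)]
    (K : ℕ) (hK : 1 ≤ K) (P : ℝ) (hP : 0 < P)
    (π : Measure ℂ) [IsProbabilityMeasure π]
    (hmom : Integrable (fun x : ℂ => ‖x‖ ^ 2) π)
    (a b : ℕ → Fin K → Ω → ℂ)
    (ha_meas : ∀ n k, Measurable (a n k)) (hb_meas : ∀ n k, Measurable (b n k))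
    (ha_law : ∀ n k, Measure.map (a n k) ℙ = π)
    (hb_law : ∀ n k, Measure.map (b n k) ℙ = π)
    (h_indep : iIndepFun
      (Sum.elim (fun p : ℕ × Fin K => a p.1 p.2) (fun p : ℕ × Fin K => b p.1 p.2)) ℙ)
    -- the moments and the constants A, B
    (m1 : ℂ) (hm1 : m1 = ∫ x, x ∂π)
    (m2 : ℝ) (hm2 : m2 = ∫ x, ‖x‖ ^ 2 ∂π)
    (A B : ℝ)
    (hA : A = 1 + 2 * P * m2)
    (hB : B = P ^ 2 / K * (m2 ^ 2 + (K - 1 : ℝ) * ‖m1‖ ^ 4))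
    -- `D m = E[det G_m]`
    (D : ℕ → ℂ)
    (hD : ∀ m : ℕ,
      D m = ∫ ω, detGK K m P (fun n k => a n k ω) (fun n k => b n k ω) ∂ℙ) :
    D 1 = (A : ℂ) ∧ D 2 = (A : ℂ) ^ 2 - (B : ℂ) ∧
      ∀ m : ℕ, 3 ≤ m → D m = (A : ℂ) * D (m - 1) - (B : ℂ) * D (m - 2) :=
  statement8_general K hK P π hmom a b ha_meas hb_meas ha_law hb_law h_indep m1 hm1 m2 hm2 A B hA hB
    D hD
end

section
/- Let M ≥ 1 and let a₁,…,a_{M+1}, b₁,…,b_M be complex numbers such that a_{i+1}* b_i ≠ 0 for 1 ≤ i ≤ M. Define x₀ = 0, x₁ = 1 and, for 1 ≤ n ≤ M, x_{n+1}(λ) = ((λ − |a_n|² − |b_n|²)/(a_{n+1}* b_n))·x_n(λ) − ((a_n b_{n−1}*)/(a_{n+1}* b_n))·x_{n−1}(λ) (the term containing b₀ is multiplied by x₀ = 0 and is irrelevant). Then for every λ ∈ ℂ, ( ∏_{i=1}^M a_{i+1}* b_i )·x_{M+1}(λ) = det( λ·I_M − H_M H_M* ). In particular, x_{M+1}(λ)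 is a polynomial of degree M in λ with leading coefficient ( ∏_{i=1}^M a_{i+1}* b_i )^{-1}, whose roots are exactly the eigenvalues of H_M H_M*. -/
open Matrix

/-- The second-order linear recurrence `x₀ = 0`, `x₁ = 1`,
`x_{n+1} = ((λ−|a_n|²−|b_n|²)/(a_{n+1}* b_n))·x_n − ((a_n b_{n−1}*)/(a_{n+1}* b_n))·x_{n−1}`. -/
noncomputable def xseq (a b : ℕ → ℂ) (lam : ℂ) : ℕ → ℂ
  | 0 => 0
  | 1 => 1
  | n + 2 =>
    ((lam - (‖a (n + 1)‖ ^ 2 : ℝ) - (‖b (n + 1)‖ ^ 2 : ℝ)) /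
        ((starRingEnd ℂ) (a (n + 2)) * b (n + 1))) * xseq a b lam (n + 1) -
      ((a (n + 1) * (starRingEnd ℂ) (b n)) /
        ((starRingEnd ℂ) (a (n + 2)) * b (n + 1))) * xseq a b lam n

/-!
`λI - H Hᴴ` is tridiagonal, with diagonal entries `λ - |aₙ|² - |bₙ|²` and products of opposite
off-diagonal entries `|aₙ₊₁|² |bₙ|²`, so its leading principal minors `Dₙ` obey the continuant
recurrence `Dₙ₊₁ = (λ - |aₙ₊₁|² - |bₙ₊₁|²) Dₙ - |aₙ₊₁|² |bₙ|² Dₙ₋₁`. Multiplying the recurrence for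
`xₙ₊₁` by `Pₙ = ∏_{1 ≤ i ≤ n} aᵢ₊₁* bᵢ` shows that `Pₙ xₙ₊₁` obeys the same recurrence: the factor
`aₙ bₙ₋₁*` of the recurrence meets the factor `aₙ* bₙ₋₁` of `Pₙ₋₁`. Both sequences start at `1`
and `λ - |a₁|² - |b₁|²`, hence they agree.
-/

theorem Matrix.det_succ_of_column_last_eq_zero {R : Type*} [CommRing R] {n : ℕ}
    (A : Matrix (Fin (n + 1)) (Fin (n + 1)) R)
    (h : ∀ i : Fin n, A i.castSucc (Fin.last n) = 0) :
    A.det = A (Fin.last n) (Fin.last n) * (A.submatrix Fin.castSucc Fin.castSucc).det := by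
  rw [det_succ_column A (Fin.last n), Fin.sum_univ_castSucc,
    Finset.sum_eq_zero fun i _ => by rw [h i, mul_zero, zero_mul], zero_add,
    Fin.succAbove_last, ← two_mul, pow_mul, neg_one_sq, one_pow, one_mul]

section Tridiagonal

variable {R : Type*} [CommRing R] (d u l : ℕ → R)

def tridiagonal (n : ℕ) : Matrix (Fin n) (Fin n) R :=
  Matrix.of fun i j =>
    if (i : ℕ) = j then d i else if (j : ℕ) = i + 1 then u i else if (i : ℕ) = j + 1 then l j
    else 0

@[simp]
theorem tridiagonal_submatrix_castSucc (n : ℕ) :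
    (tridiagonal d u l (n + 1)).submatrix Fin.castSucc Fin.castSucc = tridiagonal d u l n := by
  ext i j
  simp [tridiagonal]

theorem tridiagonal_apply_eq_zero {n : ℕ} {i j : Fin n} (h : (i : ℕ) + 1 < j ∨ (j : ℕ) + 1 < i) :
    tridiagonal d u l n i j = 0 := by
  simp only [tridiagonal, of_apply]
  rw [if_neg (by omega), if_neg (by omega), if_neg (by omega)]

theorem det_tridiagonal_add_two (n : ℕ) :
    (tridiagonal d u l (n + 2)).det =
      d (n + 1) * (tridiagonal d u l (n + 1)).det - u n * l n * (tridiagonal d u l n).det := by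
  -- deleting row `n + 1` and column `n` leaves a matrix whose last column is `u n` times a unit vector
  have hminor : ((tridiagonal d u l (n + 2)).submatrix Fin.castSucc
      (Fin.last n).castSucc.succAbove).det = u n * (tridiagonal d u l n).det := by
    rw [det_succ_of_column_last_eq_zero]
    · congr 1
      · simp [tridiagonal, Fin.succAbove]
      · congr 1
        ext i j
        simp [tridiagonal, Fin.succAbove, Fin.lt_def]
    · intro i
      exact tridiagonal_apply_eq_zero d u l (by simp [Fin.succAbove])
  have hl : tridiagonal d u l (n + 2) (Fin.last (n + 1)) (Fin.last n).castSucc = l n := by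
    simp [tridiagonal, show n ≠ n + 2 by omega]
  have hd : tridiagonal d u l (n + 2) (Fin.last (n + 1)) (Fin.last (n + 1)) = d (n + 1) := by
    simp [tridiagonal]
  rw [det_succ_row _ (Fin.last (n + 1)), Fin.sum_univ_castSucc, Fin.sum_univ_castSucc,
    Finset.sum_eq_zero fun j _ => by
      rw [tridiagonal_apply_eq_zero d u l (by simp), mul_zero, zero_mul], zero_add,
    Fin.succAbove_last, hminor, tridiagonal_submatrix_castSucc, hl, hd, Fin.val_last,
    Fin.val_castSucc, Fin.val_last, Odd.neg_one_pow ⟨n, by ring⟩, Even.neg_one_pow ⟨n + 1, rfl⟩]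
  ring

end Tridiagonal

theorem Hmat_mul_conjTranspose_apply (M : ℕ) (a b : ℕ → ℂ) (i j : Fin M) :
    (Hmat M a b * (Hmat M a b)ᴴ) i j =
      a (i + 1) * star (Hmat M a b j i.castSucc) + b (i + 1) * star (Hmat M a b j i.succ) := by
  rw [mul_apply, Fintype.sum_eq_add i.castSucc i.succ Fin.castSucc_lt_succ.ne]
  · simp [Hmat]
  · rintro k ⟨hk₁, hk₂⟩
    simp only [ne_eq, Fin.ext_iff, Fin.val_castSucc, Fin.val_succ] at hk₁ hk₂
    simp [Hmat, hk₁, hk₂]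

theorem smul_one_sub_Hmat_mul_conjTranspose (M : ℕ) (a b : ℕ → ℂ) (lam : ℂ) :
    lam • (1 : Matrix (Fin M) (Fin M) ℂ) - Hmat M a b * (Hmat M a b)ᴴ =
      tridiagonal (fun i => lam - ((‖a (i + 1)‖ ^ 2 : ℝ) : ℂ) - ((‖b (i + 1)‖ ^ 2 : ℝ) : ℂ))
        (fun i => -(b (i + 1) * starRingEnd ℂ (a (i + 2))))
        (fun i => -(a (i + 2) * starRingEnd ℂ (b (i + 1)))) M := by
  ext i j
  rw [Matrix.sub_apply, Hmat_mul_conjTranspose_apply]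
  simp only [Matrix.smul_apply, one_apply, Fin.ext_iff, smul_eq_mul, mul_ite, mul_one, mul_zero,
    Hmat, Fin.val_castSucc, RCLike.star_def, Fin.val_succ, Nat.add_right_cancel_iff, tridiagonal,
    Complex.ofReal_pow, of_apply]
  obtain h | h | h | h : (i : ℕ) = j ∨ (j : ℕ) = i + 1 ∨ (i : ℕ) = j + 1 ∨
      ((i : ℕ) + 1 < j ∨ (j : ℕ) + 1 < i) := by omega
  · simp [h, Complex.mul_conj']
    ring
  · simp [h, show (i : ℕ) ≠ i + 1 + 1 by omega]
  · simp [h, show (j : ℕ) + 1 + 1 ≠ j by omega, show (j : ℕ) ≠ j + 1 + 1 by omega]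
  · simp (disch := omega) only [if_neg]
    simp

theorem prod_mul_eq_of_three_term_recurrence {R : Type*} [CommRing R] {x D c d e : ℕ → R}
    {N : ℕ} (hx0 : x 0 = 0) (hx1 : x 1 = 1)
    (hx : ∀ n < N, e n * x (n + 2) = c n * x (n + 1) - d n * x n)
    (hD0 : D 0 = 1) (hD1 : D 1 = c 0)
    (hD : ∀ n, D (n + 2) = c (n + 1) * D (n + 1) - d (n + 1) * e n * D n) :
    (∏ i ∈ Finset.range N, e i) * x (N + 1) = D N := by
  suffices h : ∀ n ≤ N, (∏ i ∈ Finset.range n, e i) * x (n + 1) = D n from h N le_rfl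
  intro n
  induction n using Nat.twoStepInduction with
  | zero => simp [hx1, hD0]
  | one => intro hN; simp [hx 0 hN, hx0, hx1, hD1]
  | more n ih₀ ih₁ =>
    intro hN
    calc (∏ i ∈ Finset.range (n + 2), e i) * x (n + 3)
        = (∏ i ∈ Finset.range (n + 1), e i) * (e (n + 1) * x (n + 3)) := by
          rw [Finset.prod_range_succ]; ring
      _ = c (n + 1) * ((∏ i ∈ Finset.range (n + 1), e i) * x (n + 2)) -
            d (n + 1) * e n * ((∏ i ∈ Finset.range n, e i) * x (n + 1)) := by
          rw [hx (n + 1) (by omega), Finset.prod_range_succ]; ring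
      _ = D (n + 2) := by rw [ih₀ (by omega), ih₁ (by omega), hD]

theorem mul_xseq_add_two (a b : ℕ → ℂ) (lam : ℂ) {n : ℕ}
    (hn : starRingEnd ℂ (a (n + 2)) * b (n + 1) ≠ 0) :
    starRingEnd ℂ (a (n + 2)) * b (n + 1) * xseq a b lam (n + 2) =
      (lam - ((‖a (n + 1)‖ ^ 2 : ℝ) : ℂ) - ((‖b (n + 1)‖ ^ 2 : ℝ) : ℂ)) * xseq a b lam (n + 1) -
        a (n + 1) * starRingEnd ℂ (b n) * xseq a b lam n := by
  rw [xseq, div_mul_eq_mul_div, div_mul_eq_mul_div, ← sub_div, mul_div_cancel₀ _ hn]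

theorem statement11_general
    (M : ℕ) (a b : ℕ → ℂ)
    (hne : ∀ i : ℕ, 1 ≤ i → i ≤ M → (starRingEnd ℂ) (a (i + 1)) * b i ≠ 0) :
    ∀ lam : ℂ,
      (∏ i ∈ Finset.range M, ((starRingEnd ℂ) (a (i + 2)) * b (i + 1))) *
          xseq a b lam (M + 1) =
        Matrix.det
          (lam • (1 : Matrix (Fin M) (Fin M) ℂ) -
            Hmat M a b * (Hmat M a b)ᴴ) := by
  intro lam
  rw [smul_one_sub_Hmat_mul_conjTranspose]
  refine prod_mul_eq_of_three_term_recurrence (D := fun n => (tridiagonal _ _ _ n).det) rfl rfl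
    (fun n hn => mul_xseq_add_two a b lam (hne (n + 1) (by omega) hn)) det_fin_zero ?_ fun n => ?_
  · simp [tridiagonal]
  · rw [det_tridiagonal_add_two]
    ring

theorem statement11
    (M : ℕ) (hM : 1 ≤ M) (a b : ℕ → ℂ)
    (hne : ∀ i : ℕ, 1 ≤ i → i ≤ M → (starRingEnd ℂ) (a (i + 1)) * b i ≠ 0) :
    ∀ lam : ℂ,
      (∏ i ∈ Finset.range M, ((starRingEnd ℂ) (a (i + 2)) * b (i + 1))) *
          xseq a b lam (M + 1) =
        Matrix.det
          (lam • (1 : Matrix (Fin M) (Fin M) ℂ) -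
            Hmat M a b * (Hmat M a b)ᴴ) :=
  statement11_general M a b hne
end

section
/- Let α, β, δ > 0 and define φ_{α,β} : [0,1] → [0,1] by φ_{α,β}(e) = (δ + αe)/(δ + β + αe). Then: (i) φ_{α,β} has exactly one fixed point κ_{α,β} in [0,1]; (ii) for every e ∈ [0,1] the iterates θ_n(e) defined by θ₀(e) = e and θ_n(e) = φ_{α,β}(θ_{n−1}(e)) converge to κ_{α,β}, and the convergence is uniform in the starting point: for every ε > 0 there exists n₀ ∈ ℕ such that for all e ∈ [0,1] and all n ≥ n₀, |θ_n(e) − κ_{α,β}| < ε; (iii) if α₁ < α₂ and β₁ > β₂ (all positive), then κ_{α₁,β₁} < κ_{α₂,β₂}. -/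
/-- The map `φ_{α,β}(e) = (δ + αe)/(δ + β + αe)`. -/
noncomputable def phiMap (δ α β e : ℝ) : ℝ := (δ + α * e) / (δ + β + α * e)

section auxPhi

variable {δ α β : ℝ}

lemma aux_den_pos (hδ : 0 < δ) (hα : 0 < α) (hβ : 0 < β) {e : ℝ} (he : 0 ≤ e) :
    0 < δ + β + α * e := by nlinarith [mul_nonneg hα.le he]

lemma aux_mem (hδ : 0 < δ) (hα : 0 < α) (hβ : 0 < β) {e : ℝ} (he : 0 ≤ e) :
    phiMap δ α β e ∈ Set.Icc (0:ℝ) 1 := by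
  have hd := aux_den_pos hδ hα hβ he
  have h1 : 0 ≤ δ + α * e := by nlinarith [mul_nonneg hα.le he]
  constructor
  · exact div_nonneg h1 hd.le
  · rw [phiMap, div_le_one hd]; linarith

lemma aux_mono (hδ : 0 < δ) (hα : 0 < α) (hβ : 0 < β) {x y : ℝ}
    (hx : 0 ≤ x) (hxy : x ≤ y) : phiMap δ α β x ≤ phiMap δ α β y := by
  have hdx := aux_den_pos hδ hα hβ hx
  have hdy := aux_den_pos hδ hα hβ (hx.trans hxy)
  rw [phiMap, phiMap, div_le_div_iff₀ hdx hdy]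
  nlinarith [mul_nonneg (mul_nonneg hα.le hβ.le) (sub_nonneg.2 hxy)]

lemma aux_fixed_eq (hδ : 0 < δ) (hα : 0 < α) (hβ : 0 < β) {x : ℝ} (hx : 0 ≤ x)
    (hfx : phiMap δ α β x = x) : δ + α * x = x * (δ + β + α * x) := by
  have hd := aux_den_pos hδ hα hβ hx
  rw [phiMap, div_eq_iff hd.ne'] at hfx
  linarith [hfx]

lemma aux_unique (hδ : 0 < δ) (hα : 0 < α) (hβ : 0 < β) {x y : ℝ}
    (hx : x ∈ Set.Icc (0:ℝ) 1) (hfx : phiMap δ α β x = x)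
    (hy : y ∈ Set.Icc (0:ℝ) 1) (hfy : phiMap δ α β y = y) : x = y := by
  have e1 := aux_fixed_eq hδ hα hβ hx.1 hfx
  have e2 := aux_fixed_eq hδ hα hβ hy.1 hfy
  have key : (y - x) * (δ + α * x * y) = 0 := by linear_combination y * e1 - x * e2
  have hpos : 0 < δ + α * x * y := by nlinarith [mul_nonneg (mul_nonneg hα.le hx.1) hy.1]
  have := mul_eq_zero.1 key
  rcases this with h | h
  · linarith
  · linarith

lemma aux_exists (hδ : 0 < δ) (hα : 0 < α) (hβ : 0 < β) :
    ∃ κ ∈ Set.Icc (0:ℝ) 1, phiMap δ α β κ = κ := by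
  have hcont : ContinuousOn (fun x => phiMap δ α β x - x) (Set.Icc (0:ℝ) 1) := by
    apply ContinuousOn.sub _ continuousOn_id
    apply ContinuousOn.div (by fun_prop) (by fun_prop)
    intro x hx
    exact (aux_den_pos hδ hα hβ hx.1).ne'
  have h0 : (0:ℝ) ∈ Set.Icc ((fun x => phiMap δ α β x - x) 1)
      ((fun x => phiMap δ α β x - x) 0) := by
    constructor
    · have := (aux_mem hδ hα hβ (zero_le_one) (e := 1)).2
      simpa using sub_nonpos.2 this
    · have := (aux_mem hδ hα hβ (le_refl (0:ℝ))).1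
      simpa using this
  have := intermediate_value_Icc' (by norm_num : (0:ℝ) ≤ 1) hcont h0
  obtain ⟨κ, hκ, hzero⟩ := this
  exact ⟨κ, hκ, by simpa [sub_eq_zero] using hzero⟩

lemma iter_mem (hδ : 0 < δ) (hα : 0 < α) (hβ : 0 < β) :
    ∀ n : ℕ, ∀ e ∈ Set.Icc (0:ℝ) 1, (phiMap δ α β)^[n] e ∈ Set.Icc (0:ℝ) 1 := by
  intro n
  induction n with
  | zero => intro e he; simpa using he
  | succ n ih =>
      intro e he
      rw [Function.iterate_succ_apply']
      exact aux_mem hδ hα hβ (ih e he).1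

lemma iter_mono (hδ : 0 < δ) (hα : 0 < α) (hβ : 0 < β) :
    ∀ n : ℕ, ∀ x y : ℝ, x ∈ Set.Icc (0:ℝ) 1 → y ∈ Set.Icc (0:ℝ) 1 → x ≤ y →
      (phiMap δ α β)^[n] x ≤ (phiMap δ α β)^[n] y := by
  intro n
  induction n with
  | zero => intro x y _ _ h; simpa using h
  | succ n ih =>
      intro x y hx hy h
      rw [Function.iterate_succ_apply', Function.iterate_succ_apply']
      exact aux_mono hδ hα hβ (iter_mem hδ hα hβ n x hx).1 (ih x y hx hy h)

lemma tendsto_iter (hδ : 0 < δ) (hα : 0 < α) (hβ : 0 < β) {κ : ℝ}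
    (hκ : κ ∈ Set.Icc (0:ℝ) 1) (hfix : phiMap δ α β κ = κ) {e : ℝ}
    (he : e ∈ Set.Icc (0:ℝ) 1) (hmono : Monotone (fun n => (phiMap δ α β)^[n] e) ∨
      Antitone (fun n => (phiMap δ α β)^[n] e)) :
    Filter.Tendsto (fun n => (phiMap δ α β)^[n] e) Filter.atTop (nhds κ) := by
  set a : ℕ → ℝ := fun n => (phiMap δ α β)^[n] e with ha
  have hbdd : ∀ n, a n ∈ Set.Icc (0:ℝ) 1 := fun n => iter_mem hδ hα hβ n e he
  -- the sequence converges to some limit L in [0,1]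
  have hconv : ∃ L ∈ Set.Icc (0:ℝ) 1, Filter.Tendsto a Filter.atTop (nhds L) := by
    rcases hmono with hm | hm
    · have hb : BddAbove (Set.range a) := ⟨1, by rintro _ ⟨n, rfl⟩; exact (hbdd n).2⟩
      refine ⟨⨆ n, a n, ⟨le_trans (hbdd 0).1 (le_ciSup hb 0), ciSup_le fun n => (hbdd n).2⟩,
        tendsto_atTop_ciSup hm hb⟩
    · have hb : BddBelow (Set.range a) := ⟨0, by rintro _ ⟨n, rfl⟩; exact (hbdd n).1⟩
      refine ⟨⨅ n, a n, ⟨le_ciInf fun n => (hbdd n).1, le_trans (ciInf_le hb 0) (hbdd 0).2⟩,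
        tendsto_atTop_ciInf hm hb⟩
  obtain ⟨L, hL, hT⟩ := hconv
  -- L is a fixed point
  have hcontL : ContinuousAt (phiMap δ α β) L := by
    have hd := (aux_den_pos hδ hα hβ hL.1).ne'
    show ContinuousAt (fun x => (δ + α * x) / (δ + β + α * x)) L
    exact ContinuousAt.div (by fun_prop) (by fun_prop) hd
  have h1 : Filter.Tendsto (fun n => a (n + 1)) Filter.atTop (nhds L) :=
    hT.comp (Filter.tendsto_add_atTop_nat 1)
  have h2 : Filter.Tendsto (fun n => phiMap δ α β (a n)) Filter.atTop
      (nhds (phiMap δ α β L)) := hcontL.tendsto.comp hT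
  have heq : (fun n => a (n + 1)) = fun n => phiMap δ α β (a n) := by
    funext n; simp only [ha, Function.iterate_succ_apply']
  rw [heq] at h1
  have hLfix : phiMap δ α β L = L := tendsto_nhds_unique h2 h1
  have : L = κ := aux_unique hδ hα hβ hL hLfix hκ hfix
  rwa [this] at hT

end auxPhi

theorem statement14 (δ : ℝ) (hδ : 0 < δ) :
    -- (i) a unique fixed point in [0,1]
    (∀ α β : ℝ, 0 < α → 0 < β →
      ∃! κ : ℝ, κ ∈ Set.Icc (0 : ℝ) 1 ∧ phiMap δ α β κ = κ) ∧
    -- (ii) iterates converge to the fixed point, uniformly in the start point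
    (∀ α β : ℝ, 0 < α → 0 < β →
      ∀ κ : ℝ, κ ∈ Set.Icc (0 : ℝ) 1 → phiMap δ α β κ = κ →
        ∀ ε : ℝ, 0 < ε → ∃ n₀ : ℕ, ∀ e ∈ Set.Icc (0 : ℝ) 1, ∀ n : ℕ, n₀ ≤ n →
          |(phiMap δ α β)^[n] e - κ| < ε) ∧
    -- (iii) strict monotonicity of the fixed point in (α, β)
    (∀ α₁ α₂ β₁ β₂ : ℝ, 0 < α₁ → 0 < α₂ → 0 < β₁ → 0 < β₂ →
      α₁ < α₂ → β₂ < β₁ →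
      ∀ κ₁ κ₂ : ℝ,
        κ₁ ∈ Set.Icc (0 : ℝ) 1 → phiMap δ α₁ β₁ κ₁ = κ₁ →
        κ₂ ∈ Set.Icc (0 : ℝ) 1 → phiMap δ α₂ β₂ κ₂ = κ₂ →
        κ₁ < κ₂) := by
  refine ⟨?_, ?_, ?_⟩
  · -- (i)
    intro α β hα hβ
    obtain ⟨κ, hκ, hfix⟩ := aux_exists hδ hα hβ
    exact ⟨κ, ⟨hκ, hfix⟩, fun y ⟨hy, hfy⟩ => aux_unique hδ hα hβ hy hfy hκ hfix⟩
  · -- (ii)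
    intro α β hα hβ κ hκ hfix ε hε
    have h01 : (0:ℝ) ∈ Set.Icc (0:ℝ) 1 := by norm_num
    have h11 : (1:ℝ) ∈ Set.Icc (0:ℝ) 1 := by norm_num
    have hmono0 : Monotone (fun n => (phiMap δ α β)^[n] (0:ℝ)) := by
      apply monotone_nat_of_le_succ
      intro n
      rw [Function.iterate_succ_apply]
      exact iter_mono hδ hα hβ n 0 _ h01 (aux_mem hδ hα hβ le_rfl)
        (aux_mem hδ hα hβ le_rfl).1
    have hanti1 : Antitone (fun n => (phiMap δ α β)^[n] (1:ℝ)) := by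
      apply antitone_nat_of_succ_le
      intro n
      rw [Function.iterate_succ_apply]
      exact iter_mono hδ hα hβ n _ 1 (aux_mem hδ hα hβ (by norm_num)) h11
        (aux_mem hδ hα hβ (by norm_num : (0:ℝ) ≤ 1)).2
    have ha := tendsto_iter hδ hα hβ hκ hfix h01 (Or.inl hmono0)
    have hb := tendsto_iter hδ hα hβ hκ hfix h11 (Or.inr hanti1)
    rw [Metric.tendsto_atTop] at ha hb
    obtain ⟨N₁, hN₁⟩ := ha ε hε
    obtain ⟨N₂, hN₂⟩ := hb ε hε
    refine ⟨max N₁ N₂, fun e he n hn => ?_⟩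
    have h1 := hN₁ n (le_trans (le_max_left _ _) hn)
    have h2 := hN₂ n (le_trans (le_max_right _ _) hn)
    rw [Real.dist_eq, abs_lt] at h1 h2
    have hl := iter_mono hδ hα hβ n 0 e h01 he he.1
    have hr := iter_mono hδ hα hβ n e 1 he h11 he.2
    rw [abs_lt]
    constructor <;> [linarith [h1.1]; linarith [h2.2]]
  · -- (iii)
    intro α₁ α₂ β₁ β₂ hα₁ hα₂ hβ₁ hβ₂ hαlt hβlt κ₁ κ₂ hκ₁ hfx₁ hκ₂ hfx₂
    have e1 := aux_fixed_eq hδ hα₁ hβ₁ hκ₁.1 hfx₁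
    have e2 := aux_fixed_eq hδ hα₂ hβ₂ hκ₂.1 hfx₂
    have hκ₁pos : 0 < κ₁ := by nlinarith [hκ₁.1, hκ₁.2, mul_nonneg hα₁.le hκ₁.1]
    have hκ₂pos : 0 < κ₂ := by nlinarith [hκ₂.1, hκ₂.2, mul_nonneg hα₂.le hκ₂.1]
    have hκ₁lt1 : κ₁ < 1 := by nlinarith [hκ₁.2, mul_nonneg hα₁.le hκ₁.1]
    -- g₂(κ₁) < 0, i.e. φ₂'s fixed-point polynomial is negative at κ₁
    have hg : 0 < δ + α₂ * κ₁ - κ₁ * (δ + β₂ + α₂ * κ₁) := by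
      nlinarith [e1, mul_pos (sub_pos.2 hαlt) (mul_pos hκ₁pos (sub_pos.2 hκ₁lt1)),
        mul_pos (sub_pos.2 hβlt) hκ₁pos]
    have key : (κ₂ - κ₁) * (δ + α₂ * κ₁ * κ₂)
        = κ₂ * (δ + α₂ * κ₁ - κ₁ * (δ + β₂ + α₂ * κ₁)) := by
      linear_combination (-κ₁) * e2
    have hfac : 0 < δ + α₂ * κ₁ * κ₂ := by
      nlinarith [mul_nonneg (mul_nonneg hα₂.le hκ₁.1) hκ₂.1]
    have h6 : 0 < (κ₂ - κ₁) * (δ + α₂ * κ₁ * κ₂) := key ▸ mul_pos hκ₂pos hg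
    nlinarith [h6, hfac]
end

section
/- Under hypotheses (H1) and (H2), for every λ < 0, almost surely (1/n)·( log‖(x_{n+2}(λ), x_{n+1}(λ))‖ − log|x_{n+1}(λ)| ) → 0 as n → ∞, where ‖(u,v)‖ = (|u|² + |v|²)^{1/2} for (u,v) ∈ ℂ². -/
/-!
Multiplying `x_{n+1}` by `∏_{k<n} a_{k+2}^* b_{k+1}` turns the recurrence into the three-term
recurrence of the leading principal minors `D_n` of a tridiagonal matrix with diagonal
`-λ + |a_i|² + |b_i|²`, so that `|x_{n+1}| ∏_{k<n} |a_{k+2}| |b_{k+1}| = D_n`. For `λ < 0` one gets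
`D_n > 0` and `-λ ≤ D_{n+1} / D_n ≤ -λ + |a_{n+1}|² + |b_{n+1}|²`, hence
`log ‖(x_{n+2}, x_{n+1})‖ - log |x_{n+1}|` lies between `0` and a constant plus a combination of
`|log |a_m||` and `|log |b_m||` with `m ∈ {n+1, n+2}`. Being identically distributed and integrable,
these are `o(n)` almost surely by Borel–Cantelli.
-/

open MeasureTheory ProbabilityTheory Filter

open Asymptotics Real ComplexConjugate

theorem Real.abs_log_le_of_mem_Icc {x lo hi : ℝ} (hlo : 0 < lo) (hx : x ∈ Set.Icc lo hi) :
    |log x| ≤ |log lo| + |log hi| := by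
  have hx0 : 0 < x := hlo.trans_le hx.1
  calc |log x| ≤ max |log lo| |log hi| :=
        abs_le_max_abs_abs (log_le_log hlo hx.1) (log_le_log hx0 hx.2)
    _ ≤ |log lo| + |log hi| := max_le_add_of_nonneg (abs_nonneg _) (abs_nonneg _)

theorem Real.posLog_le_abs_log (x : ℝ) : log⁺ x ≤ |log x| :=
  max_le (abs_nonneg _) (le_abs_self _)

theorem Real.abs_log_add_le {x y : ℝ} (hx : 0 < x) (hy : 0 < y) :
    |log (x + y)| ≤ log 2 + |log x| + |log y| := by
  have hlow : log x ≤ log (x + y) := log_le_log hx (by linarith)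
  have hup : log (x + y) ≤ log 2 + log⁺ x + log⁺ y := (le_max_right _ _).trans posLog_add
  exact abs_le.2 ⟨by linarith [neg_abs_le (log x), abs_nonneg (log y), log_nonneg one_le_two],
    by linarith [posLog_le_abs_log x, posLog_le_abs_log y]⟩

theorem Real.log_le_log_sqrt_sq_add_sq (u : ℝ) {v : ℝ} (hv : 0 < v) :
    log v ≤ log √(u ^ 2 + v ^ 2) :=
  log_le_log hv (le_sqrt_of_sq_le (by nlinarith))

theorem Real.log_sqrt_sq_add_sq_sub_log_le {u v : ℝ} (hu : 0 < u) (hv : 0 < v) :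
    log √(u ^ 2 + v ^ 2) - log v ≤ log 2 + |log u - log v| := by
  have hsqrt : √(u ^ 2 + v ^ 2) ≤ 2 * max u v :=
    sqrt_le_iff.2 ⟨by positivity, by nlinarith [le_max_left u v, le_max_right u v]⟩
  have hlog : log √(u ^ 2 + v ^ 2) ≤ log 2 + max (log u) (log v) := by
    calc log √(u ^ 2 + v ^ 2) ≤ log (2 * max u v) := log_le_log (by positivity) hsqrt
      _ = log 2 + max (log u) (log v) := by
        rw [log_mul two_ne_zero (lt_max_of_lt_left hu).ne',
          strictMonoOn_log.monotoneOn.map_max hu hv]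
  rcases max_choice (log u) (log v) with h | h <;> rw [h] at hlog <;>
    linarith [le_abs_self (log u - log v), abs_nonneg (log u - log v)]

theorem Asymptotics.IsLittleO.comp_add_nat {u : ℕ → ℝ} (hu : u =o[atTop] (fun n => (n : ℝ)))
    (j : ℕ) :
    (fun n => u (n + j)) =o[atTop] (fun n => (n : ℝ)) := by
  refine (hu.comp_tendsto (tendsto_add_atTop_nat j)).trans_isBigO ?_
  have hj : (fun _ : ℕ => (j : ℝ)) =O[atTop] (fun n => (n : ℝ)) :=
    (isLittleO_const_id_atTop (j : ℝ)).natCast_atTop.isBigO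
  simpa [Function.comp_def] using (isBigO_refl (fun n : ℕ => (n : ℝ)) atTop).add hj

theorem ae_forall_ne_of_absolutelyContinuous {Ω E : Type*} [MeasurableSpace Ω]
    [MeasurableSpace E] {μ : Measure Ω} {ρ ν : Measure E} [NullSingletonClass ν] {X : ℕ → Ω → E}
    (hX : ∀ n, AEMeasurable (X n) μ) (hlaw : ∀ n, μ.map (X n) = ρ) (hac : ρ ≪ ν) (c : E) :
    ∀ᵐ ω ∂μ, ∀ n, X n ω ≠ c :=
  ae_all_iff.2 fun n => ae_of_ae_map (hX n) ((hlaw n).symm ▸ hac.ae_le (ν.ae_ne c))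

theorem ae_isLittleO_natCast_of_identDistrib {Ω : Type*} [MeasureSpace Ω]
    [IsProbabilityMeasure (ℙ : Measure Ω)] {X : ℕ → Ω → ℝ} (hint : Integrable (X 0))
    (hident : ∀ n, IdentDistrib (X n) (X 0)) :
    ∀ᵐ ω, (fun n => X n ω) =o[atTop] (fun n => (n : ℝ)) := by
  have hbound : ∀ k : ℕ, ∀ᵐ ω, ∀ᶠ n in atTop, ((k : ℝ) + 1) * |X n ω| ≤ n := by
    intro k
    -- Borel–Cantelli, since `∑ₙ ℙ((k + 1) |X₀| > n) < ∞` for integrable `X₀`.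
    have hu : Measurable fun x : ℝ => ((k : ℝ) + 1) * |x| := by fun_prop
    have hsum := tsum_prob_mem_Ioi_lt_top (hint.abs.const_mul ((k : ℝ) + 1))
      (fun ω => by positivity)
    have heq : ∀ j : ℕ, ℙ {ω | ((k : ℝ) + 1) * |X j ω| ∈ Set.Ioi (j : ℝ)} =
        ℙ {ω | ((k : ℝ) + 1) * |X 0 ω| ∈ Set.Ioi (j : ℝ)} := fun j =>
      ((hident j).comp hu).measure_mem_eq measurableSet_Ioi
    rw [← tsum_congr heq] at hsum
    filter_upwards [ae_eventually_notMem hsum.ne] with ω hω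
    filter_upwards [hω] with n hn
    simpa using hn
  filter_upwards [ae_all_iff.2 hbound] with ω hω
  refine isLittleO_iff.2 fun ε hε => ?_
  obtain ⟨k, hk⟩ := exists_nat_one_div_lt hε
  filter_upwards [hω k] with n hn
  have hn' : |X n ω| ≤ 1 / ((k : ℝ) + 1) * n := by
    rw [one_div_mul_eq_div, le_div_iff₀' (by positivity)]; exact hn
  rw [norm_eq_abs, Real.norm_natCast]
  exact hn'.trans (by gcongr)

theorem ae_isLittleO_log_norm {Ω E : Type*} [MeasureSpace Ω]
    [IsProbabilityMeasure (ℙ : Measure Ω)] [NormedAddCommGroup E] [MeasurableSpace E]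
    [OpensMeasurableSpace E] {ρ : Measure E}
    {X : ℕ → Ω → E} (hX : ∀ n, AEMeasurable (X n)) (hlaw : ∀ n, (ℙ : Measure Ω).map (X n) = ρ)
    (hlog : Integrable (fun x => log ‖x‖ ^ 2) ρ) :
    ∀ᵐ ω, (fun n => log ‖X n ω‖) =o[atTop] (fun n => (n : ℝ)) := by
  have hmeas : Measurable fun x : E => log ‖x‖ := by fun_prop
  refine ae_isLittleO_natCast_of_identDistrib (X := fun n ω => log ‖X n ω‖) ?_ fun n =>
    (IdentDistrib.mk (hX n) (hX 0) (by rw [hlaw, hlaw])).comp hmeas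
  rw [← hlaw 0, integrable_map_measure (hmeas.pow_const 2).aestronglyMeasurable (hX 0)] at hlog
  exact ((memLp_two_iff_integrable_sq (hmeas.comp_aemeasurable (hX 0)).aestronglyMeasurable).2
    hlog).integrable one_le_two

/-- The `n`-th leading principal minor of the tridiagonal matrix with diagonal entries
`l + A i + B i` and off-diagonal products `A (i + 1) * B i`. -/
noncomputable def tridiagDet (A B : ℕ → ℝ) (l : ℝ) : ℕ → ℝ
  | 0 => 1
  | 1 => l + A 1 + B 1
  | n + 2 => (l + A (n + 2) + B (n + 2)) * tridiagDet A B l (n + 1) -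
      A (n + 2) * B (n + 1) * tridiagDet A B l n

section tridiagDet

variable {A B : ℕ → ℝ} {l : ℝ}

/- The lower bound `(l + B (n + 1)) D_n ≤ D_{n+1}`, stronger than `l D_n ≤ D_{n+1}`, is what
absorbs the subtracted term `A (n + 2) B (n + 1) D_n` in the induction step. -/
theorem tridiagDet_pos_and_le_succ (hl : 0 < l) (hA : ∀ n, 0 ≤ A n) (hB : ∀ n, 0 ≤ B n) (n : ℕ) :
    0 < tridiagDet A B l n ∧ (l + B (n + 1)) * tridiagDet A B l n ≤ tridiagDet A B l (n + 1) := by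
  induction n with
  | zero => simp only [tridiagDet]; constructor <;> nlinarith [hA 1]
  | succ n ih =>
    obtain ⟨hpos, hle⟩ := ih
    have hpos' : 0 < tridiagDet A B l (n + 1) := by nlinarith [hB (n + 1)]
    refine ⟨hpos', ?_⟩
    have hBle : B (n + 1) * tridiagDet A B l n ≤ tridiagDet A B l (n + 1) := by nlinarith
    show _ ≤ (l + A (n + 2) + B (n + 2)) * _ - A (n + 2) * B (n + 1) * _
    nlinarith [hA (n + 2)]

theorem tridiagDet_pos (hl : 0 < l) (hA : ∀ n, 0 ≤ A n) (hB : ∀ n, 0 ≤ B n) (n : ℕ) :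
    0 < tridiagDet A B l n :=
  (tridiagDet_pos_and_le_succ hl hA hB n).1

theorem mul_tridiagDet_le_succ (hl : 0 < l) (hA : ∀ n, 0 ≤ A n) (hB : ∀ n, 0 ≤ B n) (n : ℕ) :
    l * tridiagDet A B l n ≤ tridiagDet A B l (n + 1) := by
  obtain ⟨hpos, hle⟩ := tridiagDet_pos_and_le_succ hl hA hB n
  nlinarith [hB (n + 1)]

theorem tridiagDet_succ_le (hl : 0 < l) (hA : ∀ n, 0 ≤ A n) (hB : ∀ n, 0 ≤ B n) (n : ℕ) :
    tridiagDet A B l (n + 1) ≤ (l + A (n + 1) + B (n + 1)) * tridiagDet A B l n := by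
  cases n with
  | zero => simp [tridiagDet]
  | succ n =>
    have := tridiagDet_pos hl hA hB n
    show _ - _ ≤ _
    nlinarith [mul_nonneg (hA (n + 2)) (hB (n + 1))]

theorem abs_log_tridiagDet_succ_sub_le (hl : 0 < l) (hA : ∀ n, 0 ≤ A n) (hB : ∀ n, 0 ≤ B n)
    (n : ℕ) :
    |log (tridiagDet A B l (n + 1)) - log (tridiagDet A B l n)| ≤
      |log l| + |log (l + A (n + 1) + B (n + 1))| := by
  have hD := tridiagDet_pos hl hA hB n
  rw [← log_div (tridiagDet_pos hl hA hB _).ne' hD.ne']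
  refine abs_log_le_of_mem_Icc hl ⟨?_, ?_⟩
  · rw [le_div_iff₀ hD]; exact mul_tridiagDet_le_succ hl hA hB n
  · rw [div_le_iff₀ hD]; exact tridiagDet_succ_le hl hA hB n

end tridiagDet

theorem xseq_add_two_mul (a b : ℕ → ℂ) (lam : ℂ) (n : ℕ) (ha : a (n + 2) ≠ 0)
    (hb : b (n + 1) ≠ 0) :
    xseq a b lam (n + 2) * (conj (a (n + 2)) * b (n + 1)) =
      (lam - ‖a (n + 1)‖ ^ 2 - ‖b (n + 1)‖ ^ 2) * xseq a b lam (n + 1) -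
        a (n + 1) * conj (b n) * xseq a b lam n := by
  have ha' : conj (a (n + 2)) ≠ 0 := (map_ne_zero _).2 ha
  rw [xseq]
  field_simp
  push_cast
  ring

theorem xseq_mul_prod (a b : ℕ → ℂ) (lam : ℝ) (ha : ∀ n, a n ≠ 0) (hb : ∀ n, b n ≠ 0) (n : ℕ) :
    xseq a b lam (n + 1) * ∏ k ∈ Finset.range n, (conj (a (k + 2)) * b (k + 1)) =
      (-1) ^ n * (tridiagDet (fun m => ‖a m‖ ^ 2) (fun m => ‖b m‖ ^ 2) (-lam) n : ℂ) := by
  induction n using Nat.twoStepInduction with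
  | zero => simp [xseq, tridiagDet]
  | one =>
    have hrec := xseq_add_two_mul a b lam 0 (ha 2) (hb 1)
    simp only [Finset.prod_range_one, zero_add, Nat.reduceAdd] at hrec ⊢
    rw [hrec]
    simp only [xseq, tridiagDet]
    push_cast
    ring
  | more n ih₀ ih₁ =>
    have hrec := xseq_add_two_mul a b lam (n + 1) (ha _) (hb _)
    rw [Finset.prod_range_succ] at ih₁ ⊢
    rw [Finset.prod_range_succ]
    simp only [tridiagDet, add_assoc, Nat.reduceAdd] at hrec ih₁ ⊢
    have hoff : a (n + 2) * conj (b (n + 1)) * (conj (a (n + 2)) * b (n + 1)) =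
        ‖a (n + 2)‖ ^ 2 * ‖b (n + 1)‖ ^ 2 := by
      rw [← Complex.mul_conj', ← Complex.mul_conj']; ring
    push_cast
    linear_combination (∏ k ∈ Finset.range n, (conj (a (k + 2)) * b (k + 1))) *
        (conj (a (n + 2)) * b (n + 1)) * hrec +
      (lam - ‖a (n + 2)‖ ^ 2 - ‖b (n + 2)‖ ^ 2) * ih₁ -
      conj (a (n + 2)) * b (n + 1) * a (n + 2) * conj (b (n + 1)) * ih₀ -
      (-1) ^ n * (tridiagDet (fun m => ‖a m‖ ^ 2) (fun m => ‖b m‖ ^ 2) (-lam) n : ℂ) * hoff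

theorem norm_xseq_mul_prod {a b : ℕ → ℂ} {lam : ℝ} (hlam : lam < 0) (ha : ∀ n, a n ≠ 0)
    (hb : ∀ n, b n ≠ 0) (n : ℕ) :
    ‖xseq a b lam (n + 1)‖ * ∏ k ∈ Finset.range n, (‖a (k + 2)‖ * ‖b (k + 1)‖) =
      tridiagDet (fun m => ‖a m‖ ^ 2) (fun m => ‖b m‖ ^ 2) (-lam) n := by
  have hD := tridiagDet_pos (neg_pos.2 hlam) (fun m => sq_nonneg ‖a m‖)
    (fun m => sq_nonneg ‖b m‖) n
  have h := congrArg norm (xseq_mul_prod a b lam ha hb n)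
  simpa [norm_prod, abs_of_pos hD] using h

theorem xseq_ne_zero {a b : ℕ → ℂ} {lam : ℝ} (hlam : lam < 0) (ha : ∀ n, a n ≠ 0)
    (hb : ∀ n, b n ≠ 0) (n : ℕ) : xseq a b lam (n + 1) ≠ 0 := by
  have hD := tridiagDet_pos (neg_pos.2 hlam) (fun m => sq_nonneg ‖a m‖)
    (fun m => sq_nonneg ‖b m‖) n
  have h := norm_xseq_mul_prod hlam ha hb n
  exact norm_ne_zero_iff.1 (left_ne_zero_of_mul (h ▸ hD.ne'))

theorem log_norm_xseq {a b : ℕ → ℂ} {lam : ℝ} (hlam : lam < 0) (ha : ∀ n, a n ≠ 0)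
    (hb : ∀ n, b n ≠ 0) (n : ℕ) :
    log ‖xseq a b lam (n + 1)‖ =
      log (tridiagDet (fun m => ‖a m‖ ^ 2) (fun m => ‖b m‖ ^ 2) (-lam) n) -
        ∑ k ∈ Finset.range n, (log ‖a (k + 2)‖ + log ‖b (k + 1)‖) := by
  have hx : ‖xseq a b lam (n + 1)‖ ≠ 0 := norm_ne_zero_iff.2 (xseq_ne_zero hlam ha hb n)
  have hprod : ∀ k ∈ Finset.range n, ‖a (k + 2)‖ * ‖b (k + 1)‖ ≠ 0 := fun k _ => by simp [ha, hb]
  rw [← norm_xseq_mul_prod hlam ha hb n, log_mul hx (Finset.prod_ne_zero_iff.2 hprod),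
    log_prod hprod]
  simp [log_mul, ha, hb]

theorem log_norm_xseq_succ_sub {a b : ℕ → ℂ} {lam : ℝ} (hlam : lam < 0) (ha : ∀ n, a n ≠ 0)
    (hb : ∀ n, b n ≠ 0) (n : ℕ) :
    log ‖xseq a b lam (n + 2)‖ - log ‖xseq a b lam (n + 1)‖ =
      log (tridiagDet (fun m => ‖a m‖ ^ 2) (fun m => ‖b m‖ ^ 2) (-lam) (n + 1)) -
        log (tridiagDet (fun m => ‖a m‖ ^ 2) (fun m => ‖b m‖ ^ 2) (-lam) n) -
          log ‖a (n + 2)‖ - log ‖b (n + 1)‖ := by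
  rw [log_norm_xseq hlam ha hb, log_norm_xseq hlam ha hb, Finset.sum_range_succ]
  ring

theorem abs_log_sqrt_sub_log_norm_xseq_le {a b : ℕ → ℂ} {lam : ℝ} (hlam : lam < 0)
    (ha : ∀ n, a n ≠ 0) (hb : ∀ n, b n ≠ 0) (n : ℕ) :
    |log √(‖xseq a b lam (n + 2)‖ ^ 2 + ‖xseq a b lam (n + 1)‖ ^ 2) -
        log ‖xseq a b lam (n + 1)‖| ≤
      3 * log 2 + 2 * |log (-lam)| + 2 * |log ‖a (n + 1)‖| + |log ‖a (n + 2)‖| +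
        3 * |log ‖b (n + 1)‖| := by
  have hl : 0 < -lam := neg_pos.2 hlam
  have hu : 0 < ‖xseq a b lam (n + 2)‖ := norm_pos_iff.2 (xseq_ne_zero hlam ha hb (n + 1))
  have hv : 0 < ‖xseq a b lam (n + 1)‖ := norm_pos_iff.2 (xseq_ne_zero hlam ha hb n)
  have hA : 0 < ‖a (n + 1)‖ ^ 2 := by simp [ha]
  have hB : 0 < ‖b (n + 1)‖ ^ 2 := by simp [hb]
  have hdiag : |log (-lam + ‖a (n + 1)‖ ^ 2 + ‖b (n + 1)‖ ^ 2)| ≤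
      2 * log 2 + |log (-lam)| + 2 * |log ‖a (n + 1)‖| + 2 * |log ‖b (n + 1)‖| :=
    calc _ ≤ log 2 + |log (-lam + ‖a (n + 1)‖ ^ 2)| + |log (‖b (n + 1)‖ ^ 2)| :=
          abs_log_add_le (by positivity) hB
      _ ≤ log 2 + (log 2 + |log (-lam)| + |log (‖a (n + 1)‖ ^ 2)|) +
            |log (‖b (n + 1)‖ ^ 2)| := by
          gcongr; exact abs_log_add_le hl hA
      _ = _ := by simp only [log_pow, abs_mul, Nat.cast_ofNat, abs_two]; ring
  have hD := abs_log_tridiagDet_succ_sub_le hl (fun m => sq_nonneg ‖a m‖)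
    (fun m => sq_nonneg ‖b m‖) n
  have hratio := log_norm_xseq_succ_sub hlam ha hb n
  rw [abs_of_nonneg (sub_nonneg.2 (log_le_log_sqrt_sq_add_sq _ hv))]
  calc _ ≤ log 2 + |log ‖xseq a b lam (n + 2)‖ - log ‖xseq a b lam (n + 1)‖| :=
        log_sqrt_sq_add_sq_sub_log_le hu hv
    _ ≤ _ := by
        rw [hratio]
        have htri : ∀ x y z : ℝ, |x - y - z| ≤ |x| + |y| + |z| := fun x y z => by
          linarith [abs_sub x y, abs_sub (x - y) z]
        grw [htri]
        linarith

theorem isLittleO_log_sqrt_sub_log_norm_xseq {a b : ℕ → ℂ} {lam : ℝ} (hlam : lam < 0)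
    (ha : ∀ n, a n ≠ 0) (hb : ∀ n, b n ≠ 0)
    (ha_log : (fun n => log ‖a n‖) =o[atTop] (fun n => (n : ℝ)))
    (hb_log : (fun n => log ‖b n‖) =o[atTop] (fun n => (n : ℝ))) :
    (fun n => log √(‖xseq a b lam (n + 2)‖ ^ 2 + ‖xseq a b lam (n + 1)‖ ^ 2) -
        log ‖xseq a b lam (n + 1)‖) =o[atTop] (fun n => (n : ℝ)) := by
  have hbound := (((isLittleO_const_id_atTop (3 * log 2 + 2 * |log (-lam)|)).natCast_atTop.add
    ((ha_log.comp_add_nat 1).abs_left.const_mul_left 2)).add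
    (ha_log.comp_add_nat 2).abs_left).add
    ((hb_log.comp_add_nat 1).abs_left.const_mul_left 3)
  refine (isBigO_of_le _ fun n => ?_).trans_isLittleO hbound
  rw [norm_eq_abs, norm_eq_abs]
  exact (abs_log_sqrt_sub_log_norm_xseq_le hlam ha hb n).trans (le_abs_self _)

theorem statement18_general
    {Ω : Type*} [MeasureSpace Ω] [IsProbabilityMeasure (ℙ : Measure Ω)]
    (πa πb : Measure ℂ)
    (a b : ℕ → Ω → ℂ)
    (ha_meas : ∀ n, Measurable (a n)) (hb_meas : ∀ n, Measurable (b n))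
    (ha_law : ∀ n, Measure.map (a n) ℙ = πa)
    (hb_law : ∀ n, Measure.map (b n) ℙ = πb)
    -- (H1)
    (H1a : Integrable (fun x : ℂ => (Real.log ‖x‖) ^ 2) πa)
    (H1b : Integrable (fun x : ℂ => (Real.log ‖x‖) ^ 2) πb)
    -- (H2)
    (H2a : πa ≪ (volume : Measure ℂ)) (H2b : πb ≪ (volume : Measure ℂ))
    (lam : ℝ) (hlam : lam < 0) :
    ∀ᵐ ω ∂ℙ, Tendsto
      (fun n : ℕ =>
        (1 / (n : ℝ)) *
          (Real.log (Real.sqrt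
            (‖xseq (fun m => a m ω) (fun m => b m ω) (lam : ℂ) (n + 2)‖ ^ 2 +
             ‖xseq (fun m => a m ω) (fun m => b m ω) (lam : ℂ) (n + 1)‖ ^ 2)) -
           Real.log ‖
            (xseq (fun m => a m ω) (fun m => b m ω) (lam : ℂ) (n + 1))‖))
      atTop (nhds 0) := by
  have ha_ne :=
    ae_forall_ne_of_absolutelyContinuous (fun n => (ha_meas n).aemeasurable) ha_law H2a 0
  have hb_ne :=
    ae_forall_ne_of_absolutelyContinuous (fun n => (hb_meas n).aemeasurable) hb_law H2b 0
  have ha_log := ae_isLittleO_log_norm (fun n => (ha_meas n).aemeasurable) ha_law H1a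
  have hb_log := ae_isLittleO_log_norm (fun n => (hb_meas n).aemeasurable) hb_law H1b
  filter_upwards [ha_ne, hb_ne, ha_log, hb_log] with ω ha hb ha_log hb_log
  refine (isLittleO_log_sqrt_sub_log_norm_xseq hlam ha hb ha_log hb_log).tendsto_div_nhds_zero.congr
    fun n => (one_div_mul_eq_div _ _).symm

theorem statement18
    {Ω : Type*} [MeasureSpace Ω] [IsProbabilityMeasure (ℙ : Measure Ω)]
    (πa πb : Measure ℂ) [IsProbabilityMeasure πa] [IsProbabilityMeasure πb]
    (a b : ℕ → Ω → ℂ)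
    (ha_meas : ∀ n, Measurable (a n)) (hb_meas : ∀ n, Measurable (b n))
    (ha_law : ∀ n, Measure.map (a n) ℙ = πa)
    (hb_law : ∀ n, Measure.map (b n) ℙ = πb)
    (h_indep : iIndepFun (Sum.elim a b) ℙ)
    -- (H1)
    (H1a : Integrable (fun x : ℂ => (Real.log ‖x‖) ^ 2) πa)
    (H1b : Integrable (fun x : ℂ => (Real.log ‖x‖) ^ 2) πb)
    -- (H2)
    (H2a : πa ≪ (volume : Measure ℂ)) (H2b : πb ≪ (volume : Measure ℂ))
    (lam : ℝ) (hlam : lam < 0) :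
    ∀ᵐ ω ∂ℙ, Tendsto
      (fun n : ℕ =>
        (1 / (n : ℝ)) *
          (Real.log (Real.sqrt
            (‖xseq (fun m => a m ω) (fun m => b m ω) (lam : ℂ) (n + 2)‖ ^ 2 +
             ‖xseq (fun m => a m ω) (fun m => b m ω) (lam : ℂ) (n + 1)‖ ^ 2)) -
           Real.log ‖
            (xseq (fun m => a m ω) (fun m => b m ω) (lam : ℂ) (n + 1))‖))
      atTop (nhds 0) :=
  statement18_general πa πb a b ha_meas hb_meas ha_law hb_law H1a H1b H2a H2b lam hlam
end

section
/- Fix λ < 0 and assume (H2). Then there is no measurable family {V(X) : X ∈ (ℂ∖{0})⁴} of one-dimensional complex linear subspaces of ℂ² such that, for (π_a ⊗ π_a ⊗ π_a ⊗ π_b ⊗ π_b ⊗ π_b)-almost every (a₁, a₂, a₃, b₀, b₁, b₂) ∈ ℂ⁶, the matrix g(a₂, a₃, b₁, b₂) maps V(a₂, a₁, b₁, b₀) onto V(a₃, a₂, b₂, b₁). -/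
/-!
The relation `g V = V'` is used in the cross-multiplied form `MapsLine`. Since `g(a₂, a₃, b₁, b₂)`
is invertible, two instances of the relation with the same matrix and the same target line have
the same source line. Among nine independent points (five `πa`- and four `πb`-distributed) this
makes the line `V(a₃, ·, b₂, ·)` independent of its second and fourth arguments, and the relations
close up into two triangles `s → u → t`, `s → v → t` with `u`, `v` sitting at `(a₁, b₁)`,
`(a₂, b₁)`. Eliminating `t` and `u` (resp. `v`) gives a quadratic identity in `|a₁|²`
(resp. `|a₂|²`), and for `|a₁| ≠ |a₂|` the two identities force `λ |b₁|² = 0`. Almost surely all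
the relations needed hold at once, and (H2) rules out zero coordinates and `|a₁| = |a₂|`.
-/

open MeasureTheory ProbabilityTheory Matrix

/-- The 2×2 transfer matrix `g(a, a', b, b')` with first row
`((λ − |a|² − |b'|²)/(a'* b'), −a·b*/(a'* b'))` and second row `(1, 0)`. -/
noncomputable def gmat (lam : ℝ) (a a' b b' : ℂ) : Matrix (Fin 2) (Fin 2) ℂ :=
  !![((lam : ℂ) - (‖a‖ ^ 2 : ℝ) - (‖b'‖ ^ 2 : ℝ)) /
      ((starRingEnd ℂ) a' * b'),
    -(a * (starRingEnd ℂ) b) / ((starRingEnd ℂ) a' * b');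
    1, 0]

open Function ComplexConjugate

def cross (P Q : Fin 2 → ℂ) : ℂ := P 0 * Q 1 - P 1 * Q 0

/-- `g(a, a', b, b')` maps the line through `P` onto the line through `Q`, written as
`(g P) × Q = 0` multiplied by `conj a' * b'`, on the domain where `g` is defined and invertible. -/
structure MapsLine (lam : ℝ) (a a' b b' : ℂ) (P Q : Fin 2 → ℂ) : Prop where
  ha : a ≠ 0
  ha' : a' ≠ 0
  hb : b ≠ 0
  hb' : b' ≠ 0
  eq : ((lam - ‖a‖ ^ 2 - ‖b'‖ ^ 2) * P 0 - a * conj b * P 1) * Q 1 = conj a' * b' * P 0 * Q 0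

namespace MapsLine

variable {lam : ℝ} {a a' b b' : ℂ} {P P' Q Q' : Fin 2 → ℂ}

theorem of_map_span_eq (ha : a ≠ 0) (ha' : a' ≠ 0) (hb : b ≠ 0) (hb' : b' ≠ 0)
    (h : Submodule.map (gmat lam a a' b b').mulVecLin (Submodule.span ℂ {P}) =
      Submodule.span ℂ {Q}) :
    MapsLine lam a a' b b' P Q := by
  obtain ⟨c, hc⟩ : ∃ c : ℂ, c • Q = gmat lam a a' b b' *ᵥ P := by
    rw [← Submodule.mem_span_singleton, ← h]
    exact Submodule.mem_map_of_mem (Submodule.mem_span_singleton_self P)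
  have h0 := congrFun hc 0
  have h1 := congrFun hc 1
  simp only [gmat, Pi.smul_apply, smul_eq_mul, mulVec, dotProduct, Fin.sum_univ_two, of_apply,
    cons_val', cons_val_zero, cons_val_one, empty_val', cons_val_fin_one] at h0 h1
  refine ⟨ha, ha', hb, hb', ?_⟩
  have : conj a' ≠ 0 := (map_ne_zero _).2 ha'
  have h0' : conj a' * b' * (c * Q 0) =
      (lam - ‖a‖ ^ 2 - ‖b'‖ ^ 2) * P 0 - a * conj b * P 1 := by
    rw [h0]
    field_simp
    push_cast
    ring
  linear_combination -Q 1 * h0' + conj a' * b' * Q 0 * h1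

theorem beta_ne_zero (h : MapsLine lam a a' b b' P Q) : a * conj b ≠ 0 :=
  mul_ne_zero h.ha ((map_ne_zero _).2 h.hb)

theorem gamma_ne_zero (h : MapsLine lam a a' b b' P Q) : conj a' * b' ≠ 0 :=
  mul_ne_zero ((map_ne_zero _).2 h.ha') h.hb'

theorem apply_zero_eq_zero (h : MapsLine lam a a' b b' P Q) (hQ : Q ≠ 0) (hQ1 : Q 1 = 0) :
    P 0 = 0 := by
  have hQ0 : Q 0 ≠ 0 := fun hQ0 => hQ (funext (Fin.forall_fin_two.2 ⟨hQ0, hQ1⟩))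
  have := h.eq
  rw [hQ1, mul_zero, eq_comm] at this
  simpa [h.gamma_ne_zero, hQ0] using this

theorem apply_one_eq_zero (h : MapsLine lam a a' b b' P Q) (hP : P ≠ 0) (hP0 : P 0 = 0) :
    Q 1 = 0 := by
  have hP1 : P 1 ≠ 0 := fun hP1 => hP (funext (Fin.forall_fin_two.2 ⟨hP0, hP1⟩))
  have := h.eq
  rw [hP0] at this
  simpa [h.beta_ne_zero, hP1] using this

theorem cross_eq_zero (h : MapsLine lam a a' b b' P Q) (h' : MapsLine lam a a' b b' P' Q)
    (hQ : Q ≠ 0) : cross P P' = 0 := by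
  by_cases hQ1 : Q 1 = 0
  · simp [cross, h.apply_zero_eq_zero hQ hQ1, h'.apply_zero_eq_zero hQ hQ1]
  · have : a * conj b * Q 1 * cross P P' = 0 := by
      unfold cross
      linear_combination P' 0 * h.eq - P 0 * h'.eq
    simpa [h.beta_ne_zero, hQ1] using this

theorem of_cross_eq_zero (h : MapsLine lam a a' b b' P Q) (hQ : Q ≠ 0)
    (hQQ' : cross Q Q' = 0) : MapsLine lam a a' b b' P Q' := by
  refine ⟨h.ha, h.ha', h.hb, h.hb', ?_⟩
  unfold cross at hQQ'
  by_cases hQ0 : Q 0 = 0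
  · have hQ1 : Q 1 ≠ 0 := fun hQ1 => hQ (funext (Fin.forall_fin_two.2 ⟨hQ0, hQ1⟩))
    apply mul_left_cancel₀ hQ1
    linear_combination Q' 1 * h.eq + conj a' * b' * P 0 * hQQ'
  · apply mul_left_cancel₀ hQ0
    linear_combination Q' 0 * h.eq + ((lam - ‖a‖ ^ 2 - ‖b'‖ ^ 2) * P 0 - a * conj b * P 1) * hQQ'

end MapsLine

section Triangles

variable {lam : ℝ} {a₀ a₁ a₂ a₃ b₀ b₁ b₂ : ℂ} {s u v t : Fin 2 → ℂ}

theorem MapsLine.triangle_identity (hsu : MapsLine lam a₀ a₁ b₀ b₁ s u)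
    (hst : MapsLine lam a₀ a₃ b₀ b₂ s t) (hut : MapsLine lam a₁ a₃ b₁ b₂ u t)
    (ht : t 1 ≠ 0) (hu : u 0 ≠ 0) :
    let c := ‖a₀‖ ^ 2 * s 0 + a₀ * conj b₀ * s 1
    ((lam - ‖b₁‖ ^ 2) * s 0 - c) * (c - ‖a₁‖ ^ 2 * s 0) = ‖a₁‖ ^ 2 * ‖b₁‖ ^ 2 * s 0 ^ 2 := by
  intro c
  -- `s → t` and `u → t` carry the same factor `conj a₃ * b₂`, so `t` drops out.
  have hu1 : a₁ * conj b₁ * u 1 * s 0 = (c - ‖a₁‖ ^ 2 * s 0) * u 0 := by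
    apply mul_left_cancel₀ ht
    linear_combination u 0 * hst.eq - s 0 * hut.eq
  apply mul_right_cancel₀ hu
  linear_combination -((lam - ‖b₁‖ ^ 2) * s 0 - c) * hu1 + a₁ * conj b₁ * s 0 * hsu.eq
    + s 0 ^ 2 * u 0 * b₁ * conj b₁ * Complex.mul_conj' a₁
    + s 0 ^ 2 * u 0 * ‖a₁‖ ^ 2 * Complex.mul_conj' b₁

theorem false_of_triangle_identities {a a' b x y : ℂ} (hlam : lam ≠ 0) (hb : b ≠ 0)
    (hy : y ≠ 0) (hnorm : ‖a‖ ≠ ‖a'‖)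
    (h : ((lam - ‖b‖ ^ 2) * y - x) * (x - ‖a‖ ^ 2 * y) = ‖a‖ ^ 2 * ‖b‖ ^ 2 * y ^ 2)
    (h' : ((lam - ‖b‖ ^ 2) * y - x) * (x - ‖a'‖ ^ 2 * y) = ‖a'‖ ^ 2 * ‖b‖ ^ 2 * y ^ 2) :
    False := by
  have hsq : (‖a‖ : ℂ) ^ 2 - ‖a'‖ ^ 2 ≠ 0 := by
    have : ‖a‖ ^ 2 ≠ ‖a'‖ ^ 2 := by rwa [Ne, sq_eq_sq₀ (norm_nonneg _) (norm_nonneg _)]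
    exact sub_ne_zero.2 (by exact_mod_cast this)
  have hx : x = lam * y := by
    have : ((‖a‖ : ℂ) ^ 2 - ‖a'‖ ^ 2) * y * (lam * y - x) = 0 := by
      linear_combination h' - h
    simpa [hsq, hy, sub_eq_zero, eq_comm] using this
  have : (lam : ℂ) * ‖b‖ ^ 2 * y ^ 2 = 0 := by
    rw [hx] at h
    linear_combination -h
  simp [hlam, hb, hy] at this

theorem false_of_two_triangles (hlam : lam ≠ 0) (hs : s ≠ 0) (hu : u ≠ 0) (hv : v ≠ 0)
    (ht : t ≠ 0) (hsu : MapsLine lam a₀ a₁ b₀ b₁ s u) (hsv : MapsLine lam a₀ a₂ b₀ b₁ s v)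
    (hst : MapsLine lam a₀ a₃ b₀ b₂ s t) (hut : MapsLine lam a₁ a₃ b₁ b₂ u t)
    (hvt : MapsLine lam a₂ a₃ b₁ b₂ v t) (hnorm : ‖a₁‖ ≠ ‖a₂‖) : False := by
  have ht1 : t 1 ≠ 0 := by
    intro ht1
    have hu0 := hut.apply_zero_eq_zero ht ht1
    have hu1 := hsu.apply_one_eq_zero hs (hst.apply_zero_eq_zero ht ht1)
    exact hu (funext (Fin.forall_fin_two.2 ⟨hu0, hu1⟩))
  have hs0 : s 0 ≠ 0 := fun h => ht1 (hst.apply_one_eq_zero hs h)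
  have hu0 : u 0 ≠ 0 := fun h => ht1 (hut.apply_one_eq_zero hu h)
  have hv0 : v 0 ≠ 0 := fun h => ht1 (hvt.apply_one_eq_zero hv h)
  exact false_of_triangle_identities hlam hsu.hb' hs0 hnorm
    (hsu.triangle_identity hst hut ht1 hu0) (hsv.triangle_identity hst hvt ht1 hv0)

end Triangles

def TransferStep (lam : ℝ) (v : ℂ × ℂ × ℂ × ℂ → Fin 2 → ℂ) (a₁ a₂ a₃ b₀ b₁ b₂ : ℂ) : Prop :=
  MapsLine lam a₂ a₃ b₁ b₂ (v (a₂, a₁, b₁, b₀)) (v (a₃, a₂, b₂, b₁))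

/-- The three steps into `(a₄, b₃)` share their target line, so `v (a₃, a₀, b₂, b₀)`,
`v (a₃, a₁, b₂, b₁)` and `v (a₃, a₂, b₂, b₁)` span the same line and the remaining five steps
form two triangles. -/
theorem false_of_transferSteps {lam : ℝ} (hlam : lam ≠ 0) {v : ℂ × ℂ × ℂ × ℂ → Fin 2 → ℂ}
    (hv : ∀ X, v X ≠ 0) {a₀ a₁ a₂ a₃ a₄ b₀ b₁ b₂ b₃ : ℂ}
    (hsu : TransferStep lam v a₄ a₀ a₁ b₃ b₀ b₁) (hsv : TransferStep lam v a₄ a₀ a₂ b₃ b₀ b₁)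
    (hst : TransferStep lam v a₄ a₀ a₃ b₃ b₀ b₂) (hut : TransferStep lam v a₀ a₁ a₃ b₀ b₁ b₂)
    (hvt : TransferStep lam v a₀ a₂ a₃ b₀ b₁ b₂) (hsw : TransferStep lam v a₀ a₃ a₄ b₀ b₂ b₃)
    (huw : TransferStep lam v a₁ a₃ a₄ b₁ b₂ b₃) (hvw : TransferStep lam v a₂ a₃ a₄ b₁ b₂ b₃)
    (hnorm : ‖a₁‖ ≠ ‖a₂‖) : False := by
  have hut' := MapsLine.of_cross_eq_zero hut (hv _) (MapsLine.cross_eq_zero huw hsw (hv _))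
  have hvt' := MapsLine.of_cross_eq_zero hvt (hv _) (MapsLine.cross_eq_zero hvw hsw (hv _))
  exact false_of_two_triangles hlam (hv _) (hv _) (hv _) (hv _) hsu hsv hst hut' hvt' hnorm

section Pullback

variable {α : Type*} [MeasurableSpace α]

theorem measurePreserving_pi_comp_of_injective {ι κ : Type*} [Fintype ι] [Fintype κ]
    (m : ι → Measure α) [∀ i, IsProbabilityMeasure (m i)] {j : κ → ι} (hj : Injective j) :
    MeasurePreserving (fun w => w ∘ j) (Measure.pi m) (Measure.pi fun k => m (j k)) := by
  classical
  let _ : Fintype (Set.range j) := Subtype.fintype _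
  have hsub := measurePreserving_piEquivPiSubtypeProd m (· ∈ Set.range j)
  have hcongr := (measurePreserving_piCongrLeft (fun r : Set.range j => m r)
    (Equiv.ofInjective j hj)).symm _
  convert hcongr.comp (measurePreserving_fst.comp hsub)
  · ext k
    simp [MeasurableEquiv.piCongrLeft]
  · rfl

theorem measurePreserving_head_prod {n : ℕ} {β : Type*} [MeasurableSpace β]
    (μ : Fin (n + 1) → Measure α) [∀ i, SigmaFinite (μ i)] {ν : Measure β} [SFinite ν]
    {f : (Fin n → α) → β} (hf : MeasurePreserving f (Measure.pi fun i => μ i.succ) ν) :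
    MeasurePreserving (fun w => (w 0, f (Fin.tail w))) (Measure.pi μ) ((μ 0).prod ν) :=
  ((MeasurePreserving.id (μ 0)).prod hf).comp (measurePreserving_piFinSuccAbove μ 0)

theorem measurePreserving_pi_fin_six (μ : Fin 6 → Measure α) [∀ i, SigmaFinite (μ i)] :
    MeasurePreserving (fun w : Fin 6 → α => (w 0, w 1, w 2, w 3, w 4, w 5)) (Measure.pi μ)
      ((μ 0).prod ((μ 1).prod ((μ 2).prod ((μ 3).prod ((μ 4).prod (μ 5)))))) :=
  measurePreserving_head_prod μ <| measurePreserving_head_prod _ <|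
    measurePreserving_head_prod _ <| measurePreserving_head_prod _ <|
      measurePreserving_piFinTwo _

theorem ae_tuple_of_ae_prod {ι : Type*} [Fintype ι] (m : ι → Measure α)
    [∀ i, IsProbabilityMeasure (m i)] {j : Fin 6 → ι} (hj : Injective j)
    {P : α × α × α × α × α × α → Prop}
    (h : ∀ᵐ p ∂(m (j 0)).prod ((m (j 1)).prod ((m (j 2)).prod ((m (j 3)).prod
      ((m (j 4)).prod (m (j 5)))))), P p) :
    ∀ᵐ w ∂Measure.pi m, P (w (j 0), w (j 1), w (j 2), w (j 3), w (j 4), w (j 5)) :=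
  ((measurePreserving_pi_fin_six _).comp
    (measurePreserving_pi_comp_of_injective m hj)).quasiMeasurePreserving.ae h

end Pullback

theorem ae_norm_ne {μ : Measure ℂ} (hμ : μ ≪ volume) (r : ℝ) : ∀ᵐ z ∂μ, ‖z‖ ≠ r := by
  refine hμ.ae_le ?_
  filter_upwards [measure_eq_zero_iff_ae_notMem.1 (Measure.addHaar_sphere volume (0 : ℂ) r)]
    with z hz
  simpa using hz

theorem ae_norm_fst_ne_norm_snd {μ ν : Measure ℂ} [SFinite μ] [SFinite ν] (hν : ν ≪ volume) :
    ∀ᵐ q ∂μ.prod ν, ‖q.1‖ ≠ ‖q.2‖ := by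
  refine (Measure.ae_prod_iff_ae_ae ?_).2 (ae_of_all _ fun x => ?_)
  · exact (measurableSet_eq_fun (by fun_prop) (by fun_prop)).compl
  · exact (ae_norm_ne hν ‖x‖).mono fun _ h => h.symm

/-- `w 0, …, w 4` are the `πa`-points and `w 5, …, w 8` the `πb`-points. -/
theorem exists_configuration (πa πb : Measure ℂ) [IsProbabilityMeasure πa]
    [IsProbabilityMeasure πb] (hπa : πa ≪ volume) {S : ℂ → ℂ → ℂ → ℂ → ℂ → ℂ → Prop}
    (hS : ∀ᵐ p ∂(πa.prod (πa.prod (πa.prod (πb.prod (πb.prod πb))))),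
      S p.1 p.2.1 p.2.2.1 p.2.2.2.1 p.2.2.2.2.1 p.2.2.2.2.2) :
    ∃ w : Fin 9 → ℂ,
      S (w 4) (w 0) (w 1) (w 8) (w 5) (w 6) ∧ S (w 4) (w 0) (w 2) (w 8) (w 5) (w 6) ∧
      S (w 4) (w 0) (w 3) (w 8) (w 5) (w 7) ∧ S (w 0) (w 1) (w 3) (w 5) (w 6) (w 7) ∧
      S (w 0) (w 2) (w 3) (w 5) (w 6) (w 7) ∧ S (w 0) (w 3) (w 4) (w 5) (w 7) (w 8) ∧
      S (w 1) (w 3) (w 4) (w 6) (w 7) (w 8) ∧ S (w 2) (w 3) (w 4) (w 6) (w 7) (w 8) ∧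
      ‖w 1‖ ≠ ‖w 2‖ := by
  let m : Fin 9 → Measure ℂ := ![πa, πa, πa, πa, πa, πb, πb, πb, πb]
  have : ∀ i, IsProbabilityMeasure (m i) := by
    intro i
    fin_cases i <;> assumption
  have hnorm : ∀ᵐ w ∂Measure.pi m, ‖w 1‖ ≠ ‖w 2‖ :=
    ((measurePreserving_piFinTwo _).comp (measurePreserving_pi_comp_of_injective m
      (j := ![1, 2]) (by decide))).quasiMeasurePreserving.ae (ae_norm_fst_ne_norm_snd hπa)
  exact ((ae_tuple_of_ae_prod m (j := ![4, 0, 1, 8, 5, 6]) (by decide) hS).and <|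
    (ae_tuple_of_ae_prod m (j := ![4, 0, 2, 8, 5, 6]) (by decide) hS).and <|
    (ae_tuple_of_ae_prod m (j := ![4, 0, 3, 8, 5, 7]) (by decide) hS).and <|
    (ae_tuple_of_ae_prod m (j := ![0, 1, 3, 5, 6, 7]) (by decide) hS).and <|
    (ae_tuple_of_ae_prod m (j := ![0, 2, 3, 5, 6, 7]) (by decide) hS).and <|
    (ae_tuple_of_ae_prod m (j := ![0, 3, 4, 5, 7, 8]) (by decide) hS).and <|
    (ae_tuple_of_ae_prod m (j := ![1, 3, 4, 6, 7, 8]) (by decide) hS).and <|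
    (ae_tuple_of_ae_prod m (j := ![2, 3, 4, 6, 7, 8]) (by decide) hS).and hnorm).exists

open Measure in
theorem ae_transferStep {πa πb : Measure ℂ} [IsProbabilityMeasure πa] [IsProbabilityMeasure πb]
    {lam : ℝ} (hπa : πa ≪ volume) (hπb : πb ≪ volume) {v : ℂ × ℂ × ℂ × ℂ → Fin 2 → ℂ}
    (h : ∀ᵐ p ∂(πa.prod (πa.prod (πa.prod (πb.prod (πb.prod πb))))),
      Submodule.map (gmat lam p.2.1 p.2.2.1 p.2.2.2.2.1 p.2.2.2.2.2).mulVecLin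
        (Submodule.span ℂ {v (p.2.1, p.1, p.2.2.2.2.1, p.2.2.2.1)}) =
      Submodule.span ℂ {v (p.2.2.1, p.2.1, p.2.2.2.2.2, p.2.2.2.2.1)}) :
    ∀ᵐ p ∂(πa.prod (πa.prod (πa.prod (πb.prod (πb.prod πb))))),
      TransferStep lam v p.1 p.2.1 p.2.2.1 p.2.2.2.1 p.2.2.2.2.1 p.2.2.2.2.2 := by
  have ha : ∀ᵐ z ∂πa, z ≠ 0 := (ae_norm_ne hπa 0).mono fun _ => norm_ne_zero_iff.1
  have hb : ∀ᵐ z ∂πb, z ≠ 0 := (ae_norm_ne hπb 0).mono fun _ => norm_ne_zero_iff.1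
  filter_upwards [h, quasiMeasurePreserving_snd.ae (quasiMeasurePreserving_fst.ae ha),
    quasiMeasurePreserving_snd.ae (quasiMeasurePreserving_snd.ae
      (quasiMeasurePreserving_fst.ae ha)),
    quasiMeasurePreserving_snd.ae (quasiMeasurePreserving_snd.ae
      (quasiMeasurePreserving_snd.ae (quasiMeasurePreserving_snd.ae
        (quasiMeasurePreserving_fst.ae hb)))),
    quasiMeasurePreserving_snd.ae (quasiMeasurePreserving_snd.ae
      (quasiMeasurePreserving_snd.ae (quasiMeasurePreserving_snd.ae
        (quasiMeasurePreserving_snd.ae hb))))] with p hp ha₂ ha₃ hb₁ hb₂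
  exact MapsLine.of_map_span_eq ha₂ ha₃ hb₁ hb₂ hp

/-- A measurable family of one-dimensional subspaces of `ℂ²` indexed by
`(ℂ∖{0})⁴` is encoded by a measurable nonvanishing selection `v` of a spanning
vector: the subspace attached to `X` is `span ℂ {v X}`. The statement: there is
no such family which is a.s. equivariant under the `g`-matrices. -/
theorem statement19
    (πa πb : Measure ℂ) [IsProbabilityMeasure πa] [IsProbabilityMeasure πb]
    (lam : ℝ) (hlam : lam < 0)
    -- (H2)
    (H2a : πa ≪ (volume : Measure ℂ)) (H2b : πb ≪ (volume : Measure ℂ)) :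
    ¬ ∃ v : ℂ × ℂ × ℂ × ℂ → Fin 2 → ℂ,
        Measurable v ∧ (∀ X, v X ≠ 0) ∧
        (∀ᵐ p : ℂ × ℂ × ℂ × ℂ × ℂ × ℂ
            ∂(πa.prod (πa.prod (πa.prod (πb.prod (πb.prod πb))))),
          -- `p = (a₁, a₂, a₃, b₀, b₁, b₂)`
          Submodule.map
            (Matrix.mulVecLin (gmat lam p.2.1 p.2.2.1 p.2.2.2.2.1 p.2.2.2.2.2))
            (Submodule.span ℂ {v (p.2.1, p.1, p.2.2.2.2.1, p.2.2.2.1)}) =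
          Submodule.span ℂ {v (p.2.2.1, p.2.1, p.2.2.2.2.2, p.2.2.2.2.1)}) := by
  rintro ⟨v, -, hv, hae⟩
  obtain ⟨w, hsu, hsv, hst, hut, hvt, hsw, huw, hvw, hnorm⟩ :=
    exists_configuration πa πb H2a (ae_transferStep H2a H2b hae)
  exact false_of_transferSteps hlam.ne hv hsu hsv hst hut hvt hsw huw hvw hnorm
end
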